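/- arXiv:2107.11708 — 9 statements merged into one kernel-verified Lean document; each statement's English description precedes it below -/
import Mathlib

section
/- Suppose X ∈ ℝ^{N×N} is symmetric, X > 0, I + G X is invertible, and X satisfies the DARE X = Aᵀ X (I + G X)⁻¹ A + H. Let S = (I + G X)⁻¹ A and let (A_k, G_k, H_k) be generated by the SDA with A₀ = A, G₀ = G, H₀ = H (assuming all required inverses exist). Then for every k ≥ 0, A_k = (I + G_k X) S^{2^k}. -/
/-!
With `S = (I + G X)⁻¹ A` and `W_k = S ^ 2 ^ k`, the SDA preserves, besides the symmetry of
`G_k` and `H_k`, the pair of identities `A_k = (I + G_k X) W_k` and `X - H_k = A_kᵀ X W_k`;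
at `k = 0` these are the definition of `S` and the DARE. For the doubling step, the second
identity gives `(I + G_k H_k) W_k = A_k - G_k A_kᵀ X W_k²`, so that
`A_k (I + G_k H_k)⁻¹ A_k = A_k W_k + (G_{k+1} - G_k) X W_k² = (I + G_{k+1} X) W_k²`.
The second identity propagates in the same way; there the symmetry of `G_k` and `H_k` enters
through `(I + G_k H_k)ᵀ H_k = H_k (I + G_k H_k)`.
-/

open Matrix

/-- The structure-preserving doubling algorithm (SDA) iteration:
`SDA A G H k = (A_k, G_k, H_k)`. -/
noncomputable def SDA {N : ℕ} (A G H : Matrix (Fin N) (Fin N) ℝ) :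
    ℕ → Matrix (Fin N) (Fin N) ℝ × Matrix (Fin N) (Fin N) ℝ × Matrix (Fin N) (Fin N) ℝ
  | 0 => (A, G, H)
  | k + 1 =>
      let p := SDA A G H k
      (p.1 * (1 + p.2.1 * p.2.2)⁻¹ * p.1,
       p.2.1 + p.1 * (1 + p.2.1 * p.2.2)⁻¹ * p.2.1 * p.1ᵀ,
       p.2.2 + p.1ᵀ * p.2.2 * (1 + p.2.1 * p.2.2)⁻¹ * p.1)

namespace Matrix

variable {m n R : Type*} [CommRing R]

theorem IsSymm.mul_mul_transpose [Fintype m] {C : Matrix m m R} (hC : C.IsSymm)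
    (B : Matrix n m R) : (B * C * Bᵀ).IsSymm := by
  rw [IsSymm, transpose_mul, transpose_mul, transpose_transpose, hC.eq, Matrix.mul_assoc]

theorem IsSymm.transpose_mul_mul [Fintype m] {C : Matrix m m R} (hC : C.IsSymm)
    (B : Matrix m n R) : (Bᵀ * C * B).IsSymm := by
  simpa using hC.mul_mul_transpose Bᵀ

variable [Fintype n] [DecidableEq n]

theorem mul_nonsing_inv_eq_nonsing_inv_mul_of_mul_eq {P Q B : Matrix n n R}
    (hP : IsUnit P.det) (hQ : IsUnit Q.det) (h : P * B = B * Q) : B * Q⁻¹ = P⁻¹ * B := by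
  calc B * Q⁻¹ = P⁻¹ * (P * B) * Q⁻¹ := by rw [nonsing_inv_mul_cancel_left _ _ hP]
    _ = P⁻¹ * B := by rw [h, ← Matrix.mul_assoc, mul_nonsing_inv_cancel_right _ _ hQ]

section OneAddMul

variable {G H : Matrix n n R}

theorem IsSymm.transpose_one_add_mul (hG : G.IsSymm) (hH : H.IsSymm) :
    (1 + G * H)ᵀ = 1 + H * G := by
  rw [transpose_add, transpose_one, transpose_mul, hG.eq, hH.eq]

theorem IsSymm.nonsing_inv_one_add_mul_mul (hG : G.IsSymm) (hH : H.IsSymm)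
    (hM : IsUnit (1 + G * H).det) : ((1 + G * H)⁻¹ * G).IsSymm := by
  have hMT : IsUnit (1 + G * H)ᵀ.det := by rwa [det_transpose]
  rw [IsSymm, transpose_mul, transpose_nonsing_inv, hG.eq]
  refine mul_nonsing_inv_eq_nonsing_inv_mul_of_mul_eq hM hMT ?_
  rw [hG.transpose_one_add_mul hH]
  noncomm_ring

theorem IsSymm.mul_nonsing_inv_one_add_mul (hG : G.IsSymm) (hH : H.IsSymm)
    (hM : IsUnit (1 + G * H).det) : (H * (1 + G * H)⁻¹).IsSymm := by
  have hMT : IsUnit (1 + G * H)ᵀ.det := by rwa [det_transpose]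
  rw [IsSymm, transpose_mul, transpose_nonsing_inv, hH.eq]
  refine (mul_nonsing_inv_eq_nonsing_inv_mul_of_mul_eq hMT hM ?_).symm
  rw [hG.transpose_one_add_mul hH]
  noncomm_ring

end OneAddMul

end Matrix

section DoublingStep

variable {n R : Type*} [Fintype n] [DecidableEq n] [CommRing R] {A G H X W : Matrix n n R}

theorem doubling_step_A_eq (hM : IsUnit (1 + G * H).det) (hA : A = (1 + G * X) * W)
    (hXH : X - H = Aᵀ * X * W) :
    A * (1 + G * H)⁻¹ * A = (1 + (G + A * (1 + G * H)⁻¹ * G * Aᵀ) * X) * (W * W) := by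
  have hAW : A = (1 + G * H) * W + G * Aᵀ * X * (W * W) := by
    rw [← sub_sub_cancel X H, hXH]
    nth_rewrite 1 [hA]
    noncomm_ring
  calc A * (1 + G * H)⁻¹ * A
      = A * W + A * (1 + G * H)⁻¹ * G * Aᵀ * X * (W * W) := by
        nth_rewrite 2 [hAW]
        rw [Matrix.mul_assoc, Matrix.mul_add, nonsing_inv_mul_cancel_left _ _ hM]
        noncomm_ring
    _ = (1 + (G + A * (1 + G * H)⁻¹ * G * Aᵀ) * X) * (W * W) := by
        nth_rewrite 1 [hA]
        noncomm_ring

theorem doubling_step_X_sub_H_eq (hG : G.IsSymm) (hH : H.IsSymm) (hM : IsUnit (1 + G * H).det)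
    (hA : A = (1 + G * X) * W) (hXH : X - H = Aᵀ * X * W) :
    X - (H + Aᵀ * H * (1 + G * H)⁻¹ * A) = (A * (1 + G * H)⁻¹ * A)ᵀ * X * (W * W) := by
  set M := 1 + G * H
  have hMT : IsUnit Mᵀ.det := by rwa [det_transpose]
  have hHM : H * M⁻¹ = Mᵀ⁻¹ * H := (hG.mul_nonsing_inv_one_add_mul hH hM).eq.symm.trans
    (by rw [transpose_mul, transpose_nonsing_inv, hH.eq])
  have key : Mᵀ * X * W - H * A = Aᵀ * X * W * W := by
    rw [hG.transpose_one_add_mul hH, ← hXH, hA]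
    noncomm_ring
  calc X - (H + Aᵀ * H * M⁻¹ * A) = Aᵀ * (X * W - Mᵀ⁻¹ * (H * A)) := by
        rw [sub_add_eq_sub_sub, hXH, Matrix.mul_assoc Aᵀ H, hHM]
        noncomm_ring
    _ = Aᵀ * (Mᵀ⁻¹ * (Mᵀ * X * W - H * A)) := by
        rw [Matrix.mul_sub Mᵀ⁻¹, Matrix.mul_assoc Mᵀ, nonsing_inv_mul_cancel_left _ _ hMT,
          Matrix.mul_sub]
    _ = Aᵀ * Mᵀ⁻¹ * (Aᵀ * X * W * W) := by
        rw [key, ← Matrix.mul_assoc Aᵀ]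
    _ = (A * M⁻¹ * A)ᵀ * X * (W * W) := by
        rw [transpose_mul, transpose_mul, transpose_nonsing_inv]
        noncomm_ring

end DoublingStep

section SDA

variable {N : ℕ} {A G H X : Matrix (Fin N) (Fin N) ℝ}

theorem SDA_zero : SDA A G H 0 = (A, G, H) := rfl

theorem SDA_succ (k : ℕ) :
    SDA A G H (k + 1) =
      let p := SDA A G H k
      (p.1 * (1 + p.2.1 * p.2.2)⁻¹ * p.1,
       p.2.1 + p.1 * (1 + p.2.1 * p.2.2)⁻¹ * p.2.1 * p.1ᵀ,
       p.2.2 + p.1ᵀ * p.2.2 * (1 + p.2.1 * p.2.2)⁻¹ * p.1) := rfl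

theorem SDA_invariants (hG : G.IsSymm) (hH : H.IsSymm) (hGX : IsUnit (1 + G * X).det)
    (hDARE : X = Aᵀ * X * (1 + G * X)⁻¹ * A + H)
    (hinv : ∀ k, IsUnit (1 + (SDA A G H k).2.1 * (SDA A G H k).2.2).det) (k : ℕ) :
    (SDA A G H k).2.1.IsSymm ∧ (SDA A G H k).2.2.IsSymm ∧
      (SDA A G H k).1 = (1 + (SDA A G H k).2.1 * X) * ((1 + G * X)⁻¹ * A) ^ 2 ^ k ∧
      X - (SDA A G H k).2.2 = (SDA A G H k).1ᵀ * X * ((1 + G * X)⁻¹ * A) ^ 2 ^ k := by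
  induction k with
  | zero =>
    refine ⟨hG, hH, ?_, ?_⟩
    · rw [SDA_zero, pow_zero, pow_one, mul_nonsing_inv_cancel_left _ _ hGX]
    · rw [SDA_zero, pow_zero, pow_one, sub_eq_iff_eq_add, ← Matrix.mul_assoc]
      exact hDARE
  | succ k ih =>
    obtain ⟨hGk, hHk, hAk, hXHk⟩ := ih
    have hW : ((1 + G * X)⁻¹ * A) ^ 2 ^ (k + 1) =
        ((1 + G * X)⁻¹ * A) ^ 2 ^ k * ((1 + G * X)⁻¹ * A) ^ 2 ^ k := by
      rw [pow_succ, pow_mul, sq]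
    rw [SDA_succ, hW]
    refine ⟨?_, ?_, doubling_step_A_eq (hinv k) hAk hXHk,
      doubling_step_X_sub_H_eq hGk hHk (hinv k) hAk hXHk⟩
    · simpa only [Matrix.mul_assoc] using
        hGk.add ((hGk.nonsing_inv_one_add_mul_mul hHk (hinv k)).mul_mul_transpose (SDA A G H k).1)
    · simpa only [Matrix.mul_assoc] using
        hHk.add ((hGk.mul_nonsing_inv_one_add_mul hHk (hinv k)).transpose_mul_mul (SDA A G H k).1)

end SDA

theorem sda_Ak_eq_general {N : ℕ} (A G H X : Matrix (Fin N) (Fin N) ℝ)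
    (hG : G.PosSemidef) (hH : H.PosSemidef)
    (hGX : IsUnit (1 + G * X).det)
    (hDARE : X = Aᵀ * X * (1 + G * X)⁻¹ * A + H)
    (hinv : ∀ k, IsUnit (1 + (SDA A G H k).2.1 * (SDA A G H k).2.2).det) :
    ∀ k, (SDA A G H k).1 = (1 + (SDA A G H k).2.1 * X) * ((1 + G * X)⁻¹ * A) ^ (2 ^ k) :=
  fun k ↦ (SDA_invariants (isHermitian_iff_isSymm.mp hG.isHermitian)
    (isHermitian_iff_isSymm.mp hH.isHermitian) hGX hDARE hinv k).2.2.1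

/-- Theorem 2.1(1): `A_k = (I + G_k X) S^(2^k)` where `S = (I + GX)⁻¹ A`. -/
theorem sda_Ak_eq {N : ℕ} (A G H X : Matrix (Fin N) (Fin N) ℝ)
    (hG : G.PosSemidef) (hH : H.PosSemidef)
    (hX : X.PosDef) (hXsym : X.IsSymm)
    (hGX : IsUnit (1 + G * X).det)
    (hDARE : X = Aᵀ * X * (1 + G * X)⁻¹ * A + H)
    (hinv : ∀ k, IsUnit (1 + (SDA A G H k).2.1 * (SDA A G H k).2.2).det) :
    ∀ k, (SDA A G H k).1 = (1 + (SDA A G H k).2.1 * X) * ((1 + G * X)⁻¹ * A) ^ (2 ^ k) :=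
  sda_Ak_eq_general A G H X hG hH hGX hDARE hinv
end

section
/- With the assumptions of the SDA convergence theorem (X > 0 solves the DARE, S = (I+GX)⁻¹A, and the SDA iterates are well-defined), for every k ≥ 0 one has X − H_k = (Sᵀ)^{2^k} (X + X G_k X) S^{2^k}; in particular H ≤ H_k ≤ H_{k+1} ≤ X in the Loewner order. -/
/-!
Put `S = (1 + G X)⁻¹ A`. The DARE says exactly that `A₀ = (1 + G₀ X) S` and `X - H₀ = A₀ᵀ X S`,
and one doubling step turns the pair of identities `A_k = (1 + G_k X) S^m`, `X - H_k = A_kᵀ X S^m`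
into the same pair with `m` replaced by `2m`. Substituting the first identity into the second gives
the formula for `X - H_k`, whose right-hand side is a congruence of the positive semidefinite matrix
`X + X G_k X`.

Monotonicity comes from `H_{k+1} - H_k = A_kᵀ (H_k (1 + G_k H_k)⁻¹) A_k`: writing `H_k = Bᴴ B`,
the push-through identity gives `H_k (1 + G_k H_k)⁻¹ = Bᴴ (1 + B G_k Bᴴ)⁻¹ B ≥ 0`. The same
factorisation and `det (1 + G_k Bᴴ B) = det (1 + B G_k Bᴴ) > 0` show that every inverse in the
iteration exists.
-/

open Matrix

namespace Matrix

section PushThrough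

variable {m n α : Type*} [Fintype m] [Fintype n] [DecidableEq m] [DecidableEq n] [CommRing α]

theorem nonsing_inv_one_add_mul_mul (A : Matrix m n α) (B : Matrix n m α) :
    (1 + A * B)⁻¹ * A = A * (1 + B * A)⁻¹ := by
  by_cases h : IsUnit (1 + A * B).det
  · have h' : IsUnit (1 + B * A).det := det_one_add_mul_comm A B ▸ h
    calc (1 + A * B)⁻¹ * A = (1 + A * B)⁻¹ * (A * (1 + B * A)) * (1 + B * A)⁻¹ := by
          rw [Matrix.mul_assoc, mul_nonsing_inv_cancel_right _ _ h']
      _ = (1 + A * B)⁻¹ * ((1 + A * B) * A) * (1 + B * A)⁻¹ := by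
          rw [Matrix.mul_add, Matrix.add_mul, Matrix.mul_one, Matrix.one_mul, Matrix.mul_assoc A]
      _ = A * (1 + B * A)⁻¹ := by rw [nonsing_inv_mul_cancel_left _ _ h]
  · have h' : ¬IsUnit (1 + B * A).det := det_one_add_mul_comm A B ▸ h
    rw [nonsing_inv_apply_not_isUnit _ h, nonsing_inv_apply_not_isUnit _ h', Matrix.zero_mul,
      Matrix.mul_zero]

end PushThrough

section PosSemidef

open scoped MatrixOrder ComplexOrder

variable {n 𝕜 : Type*} [Fintype n] [DecidableEq n] [RCLike 𝕜] {G H : Matrix n n 𝕜}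

theorem PosSemidef.exists_eq_conjTranspose_mul_self (hH : H.PosSemidef) :
    ∃ B : Matrix n n 𝕜, H = Bᴴ * B :=
  ⟨CFC.sqrt H, by
    rw [(CFC.sqrt_nonneg H).posSemidef.isHermitian.eq, CFC.sqrt_mul_sqrt_self H hH.nonneg]⟩

theorem PosSemidef.isUnit_det_one_add_mul (hG : G.PosSemidef) (hH : H.PosSemidef) :
    IsUnit (1 + G * H).det := by
  obtain ⟨B, rfl⟩ := hH.exists_eq_conjTranspose_mul_self
  have hpos : (1 + B * G * Bᴴ).PosDef :=
    PosDef.one.add_posSemidef (hG.mul_mul_conjTranspose_same B)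
  rw [← Matrix.mul_assoc, det_one_add_mul_comm, ← Matrix.mul_assoc]
  exact (isUnit_iff_isUnit_det _).mp hpos.isUnit

theorem PosSemidef.mul_nonsing_inv_one_add_mul (hH : H.PosSemidef) (hG : G.PosSemidef) :
    (H * (1 + G * H)⁻¹).PosSemidef := by
  obtain ⟨B, rfl⟩ := hH.exists_eq_conjTranspose_mul_self
  have hpush : Bᴴ * B * (1 + G * (Bᴴ * B))⁻¹ = Bᴴ * (1 + B * G * Bᴴ)⁻¹ * B := by
    rw [Matrix.mul_assoc, ← Matrix.mul_assoc G, ← nonsing_inv_one_add_mul_mul, Matrix.mul_assoc B,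
      Matrix.mul_assoc]
  rw [hpush]
  exact (PosSemidef.one.add (hG.mul_mul_conjTranspose_same B)).inv.conjTranspose_mul_mul_same B

end PosSemidef

section Real

variable {n : Type*} {M : Matrix n n ℝ}

theorem PosSemidef.isSymm (hM : M.PosSemidef) : M.IsSymm :=
  isHermitian_iff_isSymm.mp hM.isHermitian

variable [Fintype n]

theorem PosSemidef.transpose_mul_mul_same (hM : M.PosSemidef) (B : Matrix n n ℝ) :
    (Bᵀ * M * B).PosSemidef := by
  simpa only [conjTranspose_eq_transpose_of_trivial] using hM.conjTranspose_mul_mul_same B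

theorem PosSemidef.mul_mul_transpose_same (hM : M.PosSemidef) (B : Matrix n n ℝ) :
    (B * M * Bᵀ).PosSemidef := by
  simpa only [conjTranspose_eq_transpose_of_trivial] using hM.mul_mul_conjTranspose_same B

end Real

end Matrix

section DoublingStep

variable {n R : Type*} [Fintype n] [DecidableEq n] [CommRing R] {A G H X S : Matrix n n R}

theorem doubling_step_fst (h : IsUnit (1 + G * H).det) (hA : A = (1 + G * X) * S)
    (hXH : X - H = Aᵀ * X * S) :
    A * (1 + G * H)⁻¹ * A = (1 + (G + A * (1 + G * H)⁻¹ * G * Aᵀ) * X) * (S * S) := by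
  set E := (1 + G * H)⁻¹
  have hEA : E * A = S + E * G * ((X - H) * S) := by
    calc E * A = E * (1 + G * H) * S + E * G * ((X - H) * S) := by rw [hA]; noncomm_ring
      _ = S + E * G * ((X - H) * S) := by rw [nonsing_inv_mul _ h, Matrix.one_mul]
  calc A * E * A = A * S + A * E * G * ((X - H) * S) := by
        rw [Matrix.mul_assoc A, hEA]; noncomm_ring
    _ = (1 + G * X) * S * S + A * E * G * (Aᵀ * X * S * S) := by rw [← hA, hXH]
    _ = (1 + (G + A * E * G * Aᵀ) * X) * (S * S) := by noncomm_ring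

theorem doubling_step_snd (hG : G.IsSymm) (hH : H.IsSymm) (h : IsUnit (1 + G * H).det)
    (hA : A = (1 + G * X) * S) (hXH : X - H = Aᵀ * X * S) :
    X - (H + Aᵀ * H * (1 + G * H)⁻¹ * A) = (A * (1 + G * H)⁻¹ * A)ᵀ * X * (S * S) := by
  set E := (1 + G * H)⁻¹
  have hE : (1 + G * H) * E = 1 := mul_nonsing_inv _ h
  have hEt : Eᵀ * (1 + H * G) = 1 := by
    simpa only [transpose_mul, transpose_add, transpose_one, hG.eq, hH.eq] using
      congrArg transpose hE
  have hfactor : (X - H) * S = (1 + H * G) * (X * S - H * E * A) := by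
    calc (X - H) * S = X * S + H * G * X * S - H * ((1 + G * X) * S) := by noncomm_ring
      _ = X * S + H * G * X * S - H * ((1 + G * H) * E) * A := by rw [hE, ← hA, Matrix.mul_one]
      _ = (1 + H * G) * (X * S - H * E * A) := by noncomm_ring
  calc X - (H + Aᵀ * H * E * A) = Aᵀ * (X * S - H * E * A) := by
        rw [sub_add_eq_sub_sub, hXH]; noncomm_ring
    _ = Aᵀ * (Eᵀ * ((X - H) * S)) := by
        rw [hfactor, ← Matrix.mul_assoc Eᵀ, hEt, Matrix.one_mul]
    _ = (A * E * A)ᵀ * X * (S * S) := by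
        rw [hXH, transpose_mul, transpose_mul]; noncomm_ring

end DoublingStep

section SDA

variable {N : ℕ} {A G H : Matrix (Fin N) (Fin N) ℝ}

theorem SDA_succ_fst (k : ℕ) : (SDA A G H (k + 1)).1 =
    (SDA A G H k).1 * (1 + (SDA A G H k).2.1 * (SDA A G H k).2.2)⁻¹ * (SDA A G H k).1 := rfl

theorem SDA_succ_snd_fst (k : ℕ) : (SDA A G H (k + 1)).2.1 = (SDA A G H k).2.1 +
    (SDA A G H k).1 * (1 + (SDA A G H k).2.1 * (SDA A G H k).2.2)⁻¹ * (SDA A G H k).2.1 *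
      (SDA A G H k).1ᵀ := rfl

theorem SDA_succ_snd_snd (k : ℕ) : (SDA A G H (k + 1)).2.2 = (SDA A G H k).2.2 +
    (SDA A G H k).1ᵀ * (SDA A G H k).2.2 * (1 + (SDA A G H k).2.1 * (SDA A G H k).2.2)⁻¹ *
      (SDA A G H k).1 := rfl

theorem posSemidef_SDA_succ_snd_snd_sub {k : ℕ} (hGk : (SDA A G H k).2.1.PosSemidef)
    (hHk : (SDA A G H k).2.2.PosSemidef) :
    ((SDA A G H (k + 1)).2.2 - (SDA A G H k).2.2).PosSemidef := by
  rw [SDA_succ_snd_snd, add_sub_cancel_left, Matrix.mul_assoc _ (SDA A G H k).2.2]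
  exact (hHk.mul_nonsing_inv_one_add_mul hGk).transpose_mul_mul_same _

theorem posSemidef_SDA (hG : G.PosSemidef) (hH : H.PosSemidef) :
    ∀ k, (SDA A G H k).2.1.PosSemidef ∧ (SDA A G H k).2.2.PosSemidef
  | 0 => ⟨hG, hH⟩
  | k + 1 => by
    obtain ⟨hGk, hHk⟩ := posSemidef_SDA hG hH k
    constructor
    · rw [SDA_succ_snd_fst, Matrix.mul_assoc (SDA A G H k).1, nonsing_inv_one_add_mul_mul]
      exact hGk.add ((hGk.mul_nonsing_inv_one_add_mul hHk).mul_mul_transpose_same _)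
    · simpa only [add_sub_cancel] using hHk.add (posSemidef_SDA_succ_snd_snd_sub hGk hHk)

theorem posSemidef_SDA_snd_snd_sub (hG : G.PosSemidef) (hH : H.PosSemidef) :
    ∀ k, ((SDA A G H k).2.2 - H).PosSemidef
  | 0 => by rw [SDA, sub_self]; exact PosSemidef.zero
  | k + 1 => by
    obtain ⟨hGk, hHk⟩ := posSemidef_SDA (A := A) hG hH k
    simpa only [sub_add_sub_cancel] using
      (posSemidef_SDA_succ_snd_snd_sub hGk hHk).add (posSemidef_SDA_snd_snd_sub hG hH k)

theorem SDA_doubling {X : Matrix (Fin N) (Fin N) ℝ} (hG : G.PosSemidef) (hH : H.PosSemidef)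
    (hGX : IsUnit (1 + G * X).det) (hDARE : X = Aᵀ * X * (1 + G * X)⁻¹ * A + H) :
    ∀ k, (SDA A G H k).1 = (1 + (SDA A G H k).2.1 * X) * ((1 + G * X)⁻¹ * A) ^ 2 ^ k ∧
      X - (SDA A G H k).2.2 = (SDA A G H k).1ᵀ * X * ((1 + G * X)⁻¹ * A) ^ 2 ^ k
  | 0 => by
    rw [pow_zero, pow_one]
    refine ⟨(mul_nonsing_inv_cancel_left _ _ hGX).symm, ?_⟩
    rw [← Matrix.mul_assoc]
    exact sub_eq_of_eq_add hDARE
  | k + 1 => by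
    obtain ⟨hGk, hHk⟩ := posSemidef_SDA hG hH k
    obtain ⟨hAk, hXHk⟩ := SDA_doubling hG hH hGX hDARE k
    have hunit := hGk.isUnit_det_one_add_mul hHk
    rw [pow_succ, pow_mul, sq, SDA_succ_fst, SDA_succ_snd_fst, SDA_succ_snd_snd]
    exact ⟨doubling_step_fst hunit hAk hXHk,
      doubling_step_snd hGk.isSymm hHk.isSymm hunit hAk hXHk⟩

end SDA

theorem sda_Hk_monotone_general {N : ℕ} (A G H X : Matrix (Fin N) (Fin N) ℝ)
    (hG : G.PosSemidef) (hH : H.PosSemidef)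
    (hX : X.PosDef)
    (hDARE : X = Aᵀ * X * (1 + G * X)⁻¹ * A + H) :
    ∀ k,
      X - (SDA A G H k).2.2 =
        (((1 + G * X)⁻¹ * A)ᵀ) ^ (2 ^ k) * (X + X * (SDA A G H k).2.1 * X) *
          ((1 + G * X)⁻¹ * A) ^ (2 ^ k) ∧
      ((SDA A G H k).2.2 - H).PosSemidef ∧
      ((SDA A G H (k + 1)).2.2 - (SDA A G H k).2.2).PosSemidef ∧
      (X - (SDA A G H k).2.2).PosSemidef := by
  intro k
  have hXsymm : Xᵀ = X := hX.posSemidef.isSymm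
  obtain ⟨hGk, hHk⟩ := posSemidef_SDA hG hH k
  obtain ⟨hAk, hXHk⟩ :=
    SDA_doubling hG hH (hG.isUnit_det_one_add_mul hX.posSemidef) hDARE k
  have hformula : X - (SDA A G H k).2.2 =
      (((1 + G * X)⁻¹ * A)ᵀ) ^ (2 ^ k) * (X + X * (SDA A G H k).2.1 * X) *
        ((1 + G * X)⁻¹ * A) ^ (2 ^ k) := by
    rw [hXHk, hAk, transpose_mul, transpose_add, transpose_one, transpose_mul, hGk.isSymm.eq,
      hXsymm, transpose_pow]
    noncomm_ring
  refine ⟨hformula, posSemidef_SDA_snd_snd_sub hG hH k,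
    posSemidef_SDA_succ_snd_snd_sub hGk hHk, ?_⟩
  have hmiddle : (X + X * (SDA A G H k).2.1 * X).PosSemidef := by
    simpa only [hXsymm] using hX.posSemidef.add (hGk.transpose_mul_mul_same X)
  rw [hformula, ← transpose_pow]
  exact hmiddle.transpose_mul_mul_same _

/-- Theorem 2.1(2): `X − H_k = (Sᵀ)^(2^k) (X + X G_k X) S^(2^k)` and
`H ≤ H_k ≤ H_{k+1} ≤ X` in the Loewner order. -/
theorem sda_Hk_monotone {N : ℕ} (A G H X : Matrix (Fin N) (Fin N) ℝ)
    (hG : G.PosSemidef) (hH : H.PosSemidef)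
    (hX : X.PosDef) (hXsym : X.IsSymm)
    (hGX : IsUnit (1 + G * X).det)
    (hDARE : X = Aᵀ * X * (1 + G * X)⁻¹ * A + H)
    (hinv : ∀ k, IsUnit (1 + (SDA A G H k).2.1 * (SDA A G H k).2.2).det) :
    ∀ k,
      X - (SDA A G H k).2.2 =
        (((1 + G * X)⁻¹ * A)ᵀ) ^ (2 ^ k) * (X + X * (SDA A G H k).2.1 * X) *
          ((1 + G * X)⁻¹ * A) ^ (2 ^ k) ∧
      ((SDA A G H k).2.2 - H).PosSemidef ∧
      ((SDA A G H (k + 1)).2.2 - (SDA A G H k).2.2).PosSemidef ∧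
      (X - (SDA A G H k).2.2).PosSemidef :=
  sda_Hk_monotone_general A G H X hG hH hX hDARE
end

section
/- With the assumptions of the SDA convergence theorem, if additionally Y > 0 solves the dual DARE −Y + A Y(I + H Y)⁻¹ Aᵀ + G = 0 and T = (I + HY)⁻¹Aᵀ, then for every k ≥ 0, Y − G_k = (Tᵀ)^{2^k}(Y + Y H_k Y) T^{2^k}, and hence G ≤ G_k ≤ G_{k+1} ≤ Y in the Loewner order. -/
open Matrix

section Aux

variable {N : ℕ}

private lemma ct_eq_t (B : Matrix (Fin N) (Fin N) ℝ) : Bᴴ = Bᵀ :=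
  Matrix.conjTranspose_eq_transpose_of_trivial B

private lemma herm_symm {M : Matrix (Fin N) (Fin N) ℝ} (hM : M.IsHermitian) : M.IsSymm := by
  have := hM
  rwa [Matrix.IsHermitian, ct_eq_t] at this

private lemma psd_conj {M : Matrix (Fin N) (Fin N) ℝ} (hM : M.PosSemidef)
    (B : Matrix (Fin N) (Fin N) ℝ) : (Bᵀ * M * B).PosSemidef := by
  simpa [ct_eq_t] using hM.conjTranspose_mul_mul_same B

private lemma psd_conj' {M : Matrix (Fin N) (Fin N) ℝ} (hM : M.PosSemidef)
    (B : Matrix (Fin N) (Fin N) ℝ) : (B * M * Bᵀ).PosSemidef := by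
  simpa [ct_eq_t] using hM.mul_mul_conjTranspose_same B

private lemma inv_comm {X P Q : Matrix (Fin N) (Fin N) ℝ}
    (hP : IsUnit P.det) (hQ : IsUnit Q.det) (h : X * Q = P * X) :
    P⁻¹ * X = X * Q⁻¹ := by
  calc P⁻¹ * X = P⁻¹ * X * (Q * Q⁻¹) := by rw [mul_nonsing_inv _ hQ, mul_one]
    _ = P⁻¹ * (X * Q) * Q⁻¹ := by noncomm_ring
    _ = P⁻¹ * (P * X) * Q⁻¹ := by rw [h]
    _ = (P⁻¹ * P) * X * Q⁻¹ := by noncomm_ring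
    _ = X * Q⁻¹ := by rw [nonsing_inv_mul _ hP, one_mul]

private lemma swap_det {g h : Matrix (Fin N) (Fin N) ℝ} (hgs : g.IsSymm) (hhs : h.IsSymm)
    (hu : IsUnit (1 + g * h).det) : IsUnit (1 + h * g).det := by
  have e : (1 + h * g)ᵀ = 1 + g * h := by
    rw [transpose_add, transpose_one, transpose_mul, hgs.eq, hhs.eq]
  rw [← Matrix.det_transpose, e]; exact hu

private lemma swap_mul {g h : Matrix (Fin N) (Fin N) ℝ} : g * (1 + h * g) = (1 + g * h) * g := by
  noncomm_ring

/-- `(1+g*h)⁻¹ * g` is PSD when `g, h` are PSD. -/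
private lemma inv_mul_psd {g h : Matrix (Fin N) (Fin N) ℝ} (hg : g.PosSemidef)
    (hh : h.PosSemidef) (hu : IsUnit (1 + g * h).det) :
    ((1 + g * h)⁻¹ * g).PosSemidef := by
  have hu' : IsUnit (1 + h * g).det := swap_det (herm_symm hg.isHermitian) (herm_symm hh.isHermitian) hu
  have hcomm : (1 + g * h)⁻¹ * g = g * (1 + h * g)⁻¹ := inv_comm hu hu' swap_mul
  have htr : ((1 + g * h)⁻¹)ᵀ = (1 + h * g)⁻¹ := by
    rw [transpose_nonsing_inv, transpose_add, transpose_one, transpose_mul,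
      (herm_symm hg.isHermitian).eq, (herm_symm hh.isHermitian).eq]
  have hmid : (g + g * h * g).PosSemidef := by
    have h2 := psd_conj hh g
    rw [(herm_symm hg.isHermitian).eq] at h2
    exact hg.add h2
  have key : (1 + g * h)⁻¹ * g = (1 + g * h)⁻¹ * (g + g * h * g) * ((1 + g * h)⁻¹)ᵀ := by
    rw [htr]
    have e : g + g * h * g = g * (1 + h * g) := by noncomm_ring
    rw [e, ← mul_assoc, mul_assoc _ g _, mul_assoc _ (g * (1 + h * g)) _,
      mul_assoc g _ _, mul_nonsing_inv _ hu', mul_one, hcomm]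
  rw [key]
  exact psd_conj' hmid _

end Aux

private lemma sda_invariants {N : ℕ} (A G H Y : Matrix (Fin N) (Fin N) ℝ)
    (hG : G.PosSemidef) (hH : H.PosSemidef)
    (hHY : IsUnit (1 + H * Y).det)
    (hDualDARE : Y = A * Y * (1 + H * Y)⁻¹ * Aᵀ + G)
    (hinv : ∀ k, IsUnit (1 + (SDA A G H k).2.1 * (SDA A G H k).2.2).det) :
    ∀ k,
      (SDA A G H k).2.1.IsSymm ∧ (SDA A G H k).2.2.IsSymm ∧
      (SDA A G H k).2.1.PosSemidef ∧ (SDA A G H k).2.2.PosSemidef ∧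
      ((SDA A G H k).2.1 - G).PosSemidef ∧
      ((SDA A G H k).1)ᵀ = (1 + (SDA A G H k).2.2 * Y) * ((1 + H * Y)⁻¹ * Aᵀ) ^ (2 ^ k) ∧
      Y = (SDA A G H k).1 * Y * ((1 + H * Y)⁻¹ * Aᵀ) ^ (2 ^ k) + (SDA A G H k).2.1 := by
  intro k
  induction k with
  | zero =>
    refine ⟨herm_symm hG.isHermitian, herm_symm hH.isHermitian, hG, hH,
      ?_, ?_, ?_⟩
    · show (G - G).PosSemidef
      rw [sub_self]; exact Matrix.PosSemidef.zero
    · show Aᵀ = (1 + H * Y) * ((1 + H * Y)⁻¹ * Aᵀ) ^ (2 ^ 0)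
      rw [pow_zero, pow_one, ← mul_assoc, mul_nonsing_inv _ hHY, one_mul]
    · show Y = A * Y * ((1 + H * Y)⁻¹ * Aᵀ) ^ (2 ^ 0) + G
      rw [pow_zero, pow_one, ← mul_assoc]
      exact hDualDARE
  | succ k ih =>
    obtain ⟨hgs, hhs, hgp, hhp, hgG, ih1, ih3⟩ := ih
    set a := (SDA A G H k).1 with ha
    set g := (SDA A G H k).2.1 with hgdef
    set h := (SDA A G H k).2.2 with hhdef
    set T : Matrix (Fin N) (Fin N) ℝ := (1 + H * Y)⁻¹ * Aᵀ with hT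
    set t : Matrix (Fin N) (Fin N) ℝ := T ^ (2 ^ k) with ht
    have hu : IsUnit (1 + g * h).det := hinv k
    have hu' : IsUnit (1 + h * g).det := swap_det hgs hhs hu
    have hFh : (1 + h * g)⁻¹ * h = h * (1 + g * h)⁻¹ := inv_comm hu' hu swap_mul
    have hEg : (1 + g * h)⁻¹ * g = g * (1 + h * g)⁻¹ := inv_comm hu hu' swap_mul
    have hEt : ((1 + g * h)⁻¹)ᵀ = (1 + h * g)⁻¹ := by
      rw [transpose_nonsing_inv, transpose_add, transpose_one, transpose_mul, hgs.eq, hhs.eq]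
    have hS1 : (SDA A G H (k + 1)).1 = a * (1 + g * h)⁻¹ * a := rfl
    have hS2 : (SDA A G H (k + 1)).2.1 = g + a * (1 + g * h)⁻¹ * g * aᵀ := rfl
    have hS3 : (SDA A G H (k + 1)).2.2 = h + aᵀ * h * (1 + g * h)⁻¹ * a := rfl
    have hpow : T ^ (2 ^ (k + 1)) = t * t := by
      rw [pow_succ, pow_mul, sq]
    have hYg : Y - g = a * Y * t := by
      conv_lhs => rw [ih3]
      rw [add_sub_cancel_right]
    -- step for P3
    have hEga : a * (1 + g * h)⁻¹ * g * aᵀ = a * Y * t - a * (1 + g * h)⁻¹ * a * Y * (t * t) := by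
      have e1 : g * (1 + h * Y) = (1 + g * h) * Y + (g - Y) := by noncomm_ring
      calc a * (1 + g * h)⁻¹ * g * aᵀ
          = a * (1 + g * h)⁻¹ * g * ((1 + h * Y) * t) := by rw [← ih1]
        _ = a * ((1 + g * h)⁻¹ * (g * (1 + h * Y))) * t := by noncomm_ring
        _ = a * ((1 + g * h)⁻¹ * ((1 + g * h) * Y + (g - Y))) * t := by rw [e1]
        _ = a * (((1 + g * h)⁻¹ * (1 + g * h)) * Y + (1 + g * h)⁻¹ * (g - Y)) * t := by
            noncomm_ring
        _ = a * (Y + (1 + g * h)⁻¹ * (g - Y)) * t := by rw [nonsing_inv_mul _ hu, one_mul]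
        _ = a * Y * t + a * ((1 + g * h)⁻¹ * (g - Y)) * t := by noncomm_ring
        _ = a * Y * t + a * ((1 + g * h)⁻¹ * -(a * Y * t)) * t := by
            rw [show g - Y = -(Y - g) by abel, hYg]
        _ = a * Y * t - a * (1 + g * h)⁻¹ * a * Y * (t * t) := by noncomm_ring
    have p3' : Y = (SDA A G H (k + 1)).1 * Y * T ^ (2 ^ (k + 1)) + (SDA A G H (k + 1)).2.1 := by
      rw [hS1, hS2, hpow, hEga]
      calc Y = a * Y * t + g := ih3
        _ = a * (1 + g * h)⁻¹ * a * Y * (t * t) +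
            (g + (a * Y * t - a * (1 + g * h)⁻¹ * a * Y * (t * t))) := by abel
    -- step for P1
    have p1' : ((SDA A G H (k + 1)).1)ᵀ =
        (1 + (SDA A G H (k + 1)).2.2 * Y) * T ^ (2 ^ (k + 1)) := by
      rw [hS1, hS3, hpow]
      have e2 : (1 + h * g)⁻¹ * (1 + h * Y) = 1 + h * ((1 + g * h)⁻¹ * (a * Y * t)) := by
        have e : (1 + h * Y) = (1 + h * g) + h * (Y - g) := by noncomm_ring
        rw [e, mul_add, nonsing_inv_mul _ hu', hYg, ← mul_assoc, hFh, mul_assoc]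
      calc (a * (1 + g * h)⁻¹ * a)ᵀ
          = aᵀ * ((1 + h * g)⁻¹ * aᵀ) := by
            rw [transpose_mul, transpose_mul, hEt]
        _ = aᵀ * ((1 + h * g)⁻¹ * ((1 + h * Y) * t)) := by rw [← ih1]
        _ = ((1 + h * Y) * t) * (((1 + h * g)⁻¹ * (1 + h * Y)) * t) := by
            rw [ih1]; noncomm_ring
        _ = ((1 + h * Y) * t) * ((1 + h * ((1 + g * h)⁻¹ * (a * Y * t))) * t) := by rw [e2]
        _ = (1 + h * Y) * (t * t) +
            ((1 + h * Y) * t) * (h * (1 + g * h)⁻¹ * a) * Y * (t * t) := by noncomm_ring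
        _ = (1 + h * Y) * (t * t) + aᵀ * (h * (1 + g * h)⁻¹ * a) * Y * (t * t) := by
            rw [← ih1]
        _ = (1 + (h + aᵀ * h * (1 + g * h)⁻¹ * a) * Y) * (t * t) := by noncomm_ring
    -- PSD of the G-step
    have hstep : (a * (1 + g * h)⁻¹ * g * aᵀ).PosSemidef := by
      have h2 := psd_conj' (inv_mul_psd hgp hhp hu) a
      rwa [← mul_assoc] at h2
    have hstepH : (aᵀ * h * (1 + g * h)⁻¹ * a).PosSemidef := by
      have hFhpsd : ((1 + h * g)⁻¹ * h).PosSemidef := inv_mul_psd hhp hgp hu'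
      rw [hFh] at hFhpsd
      have h2 := psd_conj hFhpsd a
      rwa [← mul_assoc] at h2
    -- symmetry
    have hgs' : (SDA A G H (k + 1)).2.1.IsSymm := by
      rw [hS2]
      show (g + a * (1 + g * h)⁻¹ * g * aᵀ)ᵀ = _
      rw [transpose_add, hgs.eq, transpose_mul, transpose_mul, transpose_mul,
        transpose_transpose, hgs.eq, hEt]
      congr 1
      rw [mul_assoc a ((1 + g * h)⁻¹) g, hEg]
      noncomm_ring
    have hhs' : (SDA A G H (k + 1)).2.2.IsSymm := by
      rw [hS3]
      show (h + aᵀ * h * (1 + g * h)⁻¹ * a)ᵀ = _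
      rw [transpose_add, hhs.eq, transpose_mul, transpose_mul, transpose_mul,
        transpose_transpose, hhs.eq, hEt]
      congr 1
      rw [← mul_assoc ((1 + h * g)⁻¹) h a, hFh]
      noncomm_ring
    refine ⟨hgs', hhs', ?_, ?_, ?_, p1', p3'⟩
    · rw [hS2]; exact hgp.add hstep
    · rw [hS3]; exact hhp.add hstepH
    · rw [hS2]
      have : g + a * (1 + g * h)⁻¹ * g * aᵀ - G = (g - G) + a * (1 + g * h)⁻¹ * g * aᵀ := by
        abel
      rw [this]
      exact hgG.add hstep

/-- Theorem 2.1(3): `Y − G_k = (Tᵀ)^(2^k) (Y + Y H_k Y) T^(2^k)` and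
`G ≤ G_k ≤ G_{k+1} ≤ Y` in the Loewner order, where `Y` solves the dual DARE
and `T = (I + HY)⁻¹ Aᵀ`. -/
theorem sda_Gk_monotone {N : ℕ} (A G H X Y : Matrix (Fin N) (Fin N) ℝ)
    (hG : G.PosSemidef) (hH : H.PosSemidef)
    (hX : X.PosDef) (hXsym : X.IsSymm)
    (hGX : IsUnit (1 + G * X).det)
    (hDARE : X = Aᵀ * X * (1 + G * X)⁻¹ * A + H)
    (hY : Y.PosDef) (hYsym : Y.IsSymm)
    (hHY : IsUnit (1 + H * Y).det)
    (hDualDARE : Y = A * Y * (1 + H * Y)⁻¹ * Aᵀ + G)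
    (hinv : ∀ k, IsUnit (1 + (SDA A G H k).2.1 * (SDA A G H k).2.2).det) :
    ∀ k,
      Y - (SDA A G H k).2.1 =
        (((1 + H * Y)⁻¹ * Aᵀ)ᵀ) ^ (2 ^ k) * (Y + Y * (SDA A G H k).2.2 * Y) *
          ((1 + H * Y)⁻¹ * Aᵀ) ^ (2 ^ k) ∧
      ((SDA A G H k).2.1 - G).PosSemidef ∧
      ((SDA A G H (k + 1)).2.1 - (SDA A G H k).2.1).PosSemidef ∧
      (Y - (SDA A G H k).2.1).PosSemidef := by
  intro k
  obtain ⟨hgs, hhs, hgp, hhp, hgG, ih1, ih3⟩ :=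
    sda_invariants A G H Y hG hH hHY hDualDARE hinv k
  set a := (SDA A G H k).1 with ha
  set g := (SDA A G H k).2.1 with hgdef
  set h := (SDA A G H k).2.2 with hhdef
  set T : Matrix (Fin N) (Fin N) ℝ := (1 + H * Y)⁻¹ * Aᵀ with hT
  set t : Matrix (Fin N) (Fin N) ℝ := T ^ (2 ^ k) with ht
  have hYg : Y - g = a * Y * t := by
    conv_lhs => rw [ih3]
    rw [add_sub_cancel_right]
  have ha' : a = tᵀ * (1 + Y * h) := by
    have e := congrArg Matrix.transpose ih1
    rw [transpose_transpose, transpose_mul, transpose_add, transpose_one,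
      transpose_mul, hYsym.eq, hhs.eq] at e
    exact e
  have hid : Y - g = tᵀ * (Y + Y * h * Y) * t := by
    rw [hYg, ha']
    noncomm_ring
  have hMpsd : (Y + Y * h * Y).PosSemidef := by
    have h2 := psd_conj hhp Y
    rw [hYsym.eq] at h2
    exact hY.posSemidef.add h2
  have hYgpsd : (Y - g).PosSemidef := by
    rw [hid]
    exact psd_conj hMpsd t
  have htT : tᵀ = (Tᵀ) ^ (2 ^ k) := transpose_pow T (2 ^ k)
  refine ⟨?_, hgG, ?_, hYgpsd⟩
  · rw [← htT]; exact hid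
  · -- G_{k+1} - G_k is PSD
    have hu : IsUnit (1 + g * h).det := hinv k
    have hS2 : (SDA A G H (k + 1)).2.1 = g + a * (1 + g * h)⁻¹ * g * aᵀ := rfl
    have hstep : (a * (1 + g * h)⁻¹ * g * aᵀ).PosSemidef := by
      have h2 := psd_conj' (inv_mul_psd hgp hhp hu) a
      rwa [← mul_assoc] at h2
    rw [hS2, add_sub_cancel_left]
    exact hstep
end

section
/- Suppose X > 0 solves the DARE and X − H_k = (Sᵀ)^{2^k}(X + X G_k X) S^{2^k} with 0 ≤ G_k ≤ Y for all k. Then ‖H_k − X‖ ≤ ‖X‖(1 + ‖X‖·‖Y‖)·‖S^{2^k}‖², and hence if ρ(S) < 1 then H_k converges to X with limsup_{k→∞} ‖H_k − X‖^{1/2^k} ≤ ρ(S)². -/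
/-!
Conjugating by `S^(2^k)` costs at most `‖S^(2^k)‖²` in the spectral norm, and
`‖X + X G_k X‖ ≤ C := ‖X‖ (1 + ‖X‖ ‖Y‖)` because the norm is monotone on positive operators
(`‖T‖` is the supremum of the Rayleigh quotient). Taking `2^k`-th roots,
`‖H_k - X‖^(1/2^k) ≤ (C + 1)^(1/2^k) (‖S^(2^k)‖^(1/2^k))²`, and by Gelfand's formula along the
subsequence `m = 2^k`, applied to the complexification of `S` (whose powers have at least the
norm of those of `S`), the right-hand side tends to `ρ(S)²`. When `ρ(S) < 1` this root bound
forces `‖H_k - X‖ ≤ s^(2^k)` eventually for some `s < 1`.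
-/

open Matrix Filter

open scoped Matrix.Norms.L2Operator Topology

namespace ContinuousLinearMap

variable {𝕜 E : Type*} [RCLike 𝕜] [NormedAddCommGroup E] [InnerProductSpace 𝕜 E]

theorem norm_le_norm_of_nonneg_of_le {T U : E →L[𝕜] E} (hT : 0 ≤ T) (hTU : T ≤ U) :
    ‖T‖ ≤ ‖U‖ := by
  rw [nonneg_iff_isPositive] at hT
  rw [le_def] at hTU
  rw [T.norm_eq_iSup_rayleighQuotient hT.isSymmetric]
  refine ciSup_le fun x => ?_
  have hUT : T.rayleighQuotient x ≤ U.rayleighQuotient x := by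
    rw [← sub_add_cancel U T, rayleighQuotient_add]
    exact le_add_of_nonneg_left (div_nonneg (hTU.2 x) (sq_nonneg _))
  calc |T.rayleighQuotient x| = T.rayleighQuotient x :=
        abs_of_nonneg (div_nonneg (hT.2 x) (sq_nonneg _))
    _ ≤ U.rayleighQuotient x := hUT
    _ ≤ ‖U‖ := (le_abs_self _).trans (U.rayleighQuotient_le_norm x)

end ContinuousLinearMap

open scoped ComplexOrder in
theorem Matrix.l2_opNorm_le_of_posSemidef {𝕜 n : Type*} [RCLike 𝕜] [Fintype n] [DecidableEq n]
    {G Y : Matrix n n 𝕜} (hG : G.PosSemidef) (hGY : (Y - G).PosSemidef) : ‖G‖ ≤ ‖Y‖ := by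
  rw [← l2_opNorm_toEuclideanCLM, ← l2_opNorm_toEuclideanCLM]
  refine ContinuousLinearMap.norm_le_norm_of_nonneg_of_le ?_ ?_
  · rw [ContinuousLinearMap.nonneg_iff_isPositive]
    exact isPositive_toEuclideanLin_iff.mpr hG
  · rw [ContinuousLinearMap.le_def, ← map_sub]
    exact isPositive_toEuclideanLin_iff.mpr hGY

theorem EuclideanSpace.norm_toLp_ofReal {n : Type*} [Fintype n] (v : n → ℝ) :
    ‖WithLp.toLp 2 (fun i => (v i : ℂ))‖ = ‖WithLp.toLp 2 v‖ := by
  simp only [EuclideanSpace.norm_eq, Complex.norm_real, Real.norm_eq_abs]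

theorem Matrix.l2_opNorm_le_l2_opNorm_map_ofReal {n : Type*} [Fintype n] [DecidableEq n]
    (B : Matrix n n ℝ) : ‖B‖ ≤ ‖B.map Complex.ofReal‖ := by
  rw [← l2_opNorm_toEuclideanCLM]
  refine ContinuousLinearMap.opNorm_le_bound _ (norm_nonneg _) fun x => ?_
  have hmulVec : B.map Complex.ofReal *ᵥ (fun i => (x i : ℂ)) = fun i => ((B *ᵥ x.ofLp) i : ℂ) :=
    funext fun i => (RingHom.map_mulVec Complex.ofRealHom B x.ofLp i).symm
  have hx := (B.map Complex.ofReal).l2_opNorm_mulVec (WithLp.toLp 2 fun i => (x i : ℂ))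
  rw [EuclideanSpace.norm_toLp_ofReal] at hx
  calc ‖toEuclideanCLM (𝕜 := ℝ) B x‖ = ‖WithLp.toLp 2 fun i => ((B *ᵥ x.ofLp) i : ℂ)‖ := by
        rw [EuclideanSpace.norm_toLp_ofReal]; rfl
    _ ≤ ‖B.map Complex.ofReal‖ * ‖x‖ := by rw [← hmulVec]; exact hx

theorem Matrix.l2_opNorm_transpose {m n : Type*} [Fintype m] [Fintype n]
    [DecidableEq m] [DecidableEq n] (B : Matrix m n ℝ) : ‖Bᵀ‖ = ‖B‖ := by
  rw [← conjTranspose_eq_transpose_of_trivial, l2_opNorm_conjTranspose]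

theorem Matrix.l2_opNorm_transpose_mul_mul_le {n : Type*} [Fintype n] [DecidableEq n]
    (B M : Matrix n n ℝ) : ‖Bᵀ * M * B‖ ≤ ‖M‖ * ‖B‖ ^ 2 :=
  calc ‖Bᵀ * M * B‖ ≤ ‖Bᵀ‖ * ‖M‖ * ‖B‖ := norm_mul₃_le
    _ = ‖M‖ * ‖B‖ ^ 2 := by rw [l2_opNorm_transpose]; ring

theorem norm_add_mul_mul_le {R : Type*} [SeminormedRing R] (x g : R) :
    ‖x + x * g * x‖ ≤ ‖x‖ * (1 + ‖x‖ * ‖g‖) :=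
  calc ‖x + x * g * x‖ ≤ ‖x‖ + ‖x‖ * ‖g‖ * ‖x‖ :=
        (norm_add_le _ _).trans (by gcongr; exact norm_mul₃_le)
    _ = ‖x‖ * (1 + ‖x‖ * ‖g‖) := by ring

theorem spectrum.tendsto_norm_pow_rpow_toReal_spectralRadius {A : Type*} [NormedRing A]
    [NormedAlgebra ℂ A] [CompleteSpace A] (a : A) (ha : spectralRadius ℂ a ≠ ⊤) {n : ℕ → ℕ}
    (hn : Tendsto n atTop atTop) :
    Tendsto (fun k => ‖a ^ n k‖ ^ (1 / (n k : ℝ))) atTop (𝓝 (spectralRadius ℂ a).toReal) := by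
  refine ((ENNReal.tendsto_toReal ha).comp
    ((pow_norm_pow_one_div_tendsto_nhds_spectralRadius a).comp hn)).congr fun k => ?_
  exact ENNReal.toReal_ofReal (by positivity)

theorem Real.rpow_le_rpow_mul_sq {u v C t : ℝ} (hu : 0 ≤ u) (hv : 0 ≤ v) (hC : 0 ≤ C)
    (huv : u ≤ C * v ^ 2) (ht : 0 ≤ t) : u ^ t ≤ C ^ t * (v ^ t) ^ 2 :=
  calc u ^ t ≤ (C * v ^ 2) ^ t := Real.rpow_le_rpow hu huv ht
    _ = C ^ t * (v ^ t) ^ 2 := by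
      rw [Real.mul_rpow hC (sq_nonneg v), Real.rpow_pow_comm hv]

section RootAsymptotics

variable {n : ℕ → ℕ} {u v g : ℕ → ℝ} {ℓ r : ℝ}

theorem tendsto_const_rpow_mul_sq (hn : Tendsto n atTop atTop) {c : ℝ} (hc : 0 < c)
    (hv : Tendsto (fun k => v k ^ (1 / (n k : ℝ))) atTop (𝓝 r)) :
    Tendsto (fun k => c ^ (1 / (n k : ℝ)) * (v k ^ (1 / (n k : ℝ))) ^ 2) atTop (𝓝 (r ^ 2)) := by
  have hc1 : Tendsto (fun k => c ^ (1 / (n k : ℝ))) atTop (𝓝 1) := by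
    simpa [Function.comp_def] using (Real.continuousAt_const_rpow hc.ne').tendsto.comp
      (tendsto_one_div_atTop_nhds_zero_nat.comp hn)
  simpa using hc1.mul (hv.pow 2)

theorem tendsto_zero_of_rpow_le (hn : Tendsto n atTop atTop) (hu0 : ∀ k, 0 ≤ u k)
    (hug : ∀ k, u k ^ (1 / (n k : ℝ)) ≤ g k) (hg : Tendsto g atTop (𝓝 ℓ)) (hℓ : ℓ < 1) :
    Tendsto u atTop (𝓝 0) := by
  obtain ⟨s, hℓs, hs1⟩ := exists_between (max_lt hℓ one_pos)
  have hs0 : 0 ≤ s := (le_max_right _ _).trans hℓs.le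
  refine squeeze_zero' (Eventually.of_forall hu0) ?_
    ((tendsto_pow_atTop_nhds_zero_of_lt_one hs0 hs1).comp hn)
  filter_upwards [hg.eventually_le_const ((le_max_left _ _).trans_lt hℓs),
    hn.eventually_ge_atTop 1] with k hgk hnk
  calc u k = (u k ^ (1 / (n k : ℝ))) ^ n k := by
        rw [one_div, Real.rpow_inv_natCast_pow (hu0 k) (by omega)]
    _ ≤ s ^ n k := pow_le_pow_left₀ (Real.rpow_nonneg (hu0 k) _) ((hug k).trans hgk) _

end RootAsymptotics

theorem limsup_le_of_le_of_tendsto {α : Type*} {l : Filter α} [l.NeBot] {f g : α → ℝ} {ℓ : ℝ}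
    (hf : ∀ x, 0 ≤ f x) (hfg : ∀ x, f x ≤ g x) (hg : Tendsto g l (𝓝 ℓ)) : limsup f l ≤ ℓ :=
  hg.limsup_eq ▸ limsup_le_limsup (Eventually.of_forall hfg)
    (isBoundedUnder_of ⟨0, hf⟩).isCoboundedUnder_le hg.isBoundedUnder_le

theorem sda_Hk_convergence_general {N : ℕ}
    (H_ G_ : ℕ → Matrix (Fin N) (Fin N) ℝ)
    (X Y S : Matrix (Fin N) (Fin N) ℝ)
    (hid : ∀ k, X - H_ k = (Sᵀ) ^ (2 ^ k) * (X + X * G_ k * X) * S ^ (2 ^ k))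
    (hGk0 : ∀ k, (G_ k).PosSemidef)
    (hGkY : ∀ k, (Y - G_ k).PosSemidef) :
    (∀ k, ‖H_ k - X‖ ≤ ‖X‖ * (1 + ‖X‖ * ‖Y‖) * ‖S ^ (2 ^ k)‖ ^ 2) ∧
      (spectralRadius ℂ (S.map Complex.ofReal) < 1 →
        Tendsto H_ atTop (𝓝 X) ∧
          limsup (fun k => ‖H_ k - X‖ ^ ((1 : ℝ) / 2 ^ k)) atTop ≤
            (spectralRadius ℂ (S.map Complex.ofReal)).toReal ^ 2) := by
  set C := ‖X‖ * (1 + ‖X‖ * ‖Y‖)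
  have hbound (k : ℕ) : ‖H_ k - X‖ ≤ C * ‖S ^ 2 ^ k‖ ^ 2 :=
    calc ‖H_ k - X‖ = ‖(S ^ 2 ^ k)ᵀ * (X + X * G_ k * X) * S ^ 2 ^ k‖ := by
          rw [norm_sub_rev, hid k, transpose_pow]
      _ ≤ ‖X + X * G_ k * X‖ * ‖S ^ 2 ^ k‖ ^ 2 := l2_opNorm_transpose_mul_mul_le _ _
      _ ≤ C * ‖S ^ 2 ^ k‖ ^ 2 := by
          grw [norm_add_mul_mul_le, l2_opNorm_le_of_posSemidef (hGk0 k) (hGkY k)]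
  refine ⟨hbound, fun hρ => ?_⟩
  set T := S.map Complex.ofReal
  have hn : Tendsto (fun k : ℕ => 2 ^ k) atTop atTop :=
    tendsto_pow_atTop_atTop_of_one_lt one_lt_two
  have hcomplexify (m : ℕ) : ‖S ^ m‖ ≤ ‖T ^ m‖ :=
    (l2_opNorm_le_l2_opNorm_map_ofReal _).trans_eq
      (congrArg norm (map_pow Complex.ofRealHom.mapMatrix S m))
  have hgelfand := spectrum.tendsto_norm_pow_rpow_toReal_spectralRadius T hρ.ne_top hn
  have hroot (k : ℕ) : ‖H_ k - X‖ ^ (1 / ((2 ^ k : ℕ) : ℝ)) ≤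
      (C + 1) ^ (1 / ((2 ^ k : ℕ) : ℝ)) * (‖T ^ 2 ^ k‖ ^ (1 / ((2 ^ k : ℕ) : ℝ))) ^ 2 := by
    refine Real.rpow_le_rpow_mul_sq (norm_nonneg _) (norm_nonneg _) (by positivity) ?_
      (by positivity)
    grw [hbound k, hcomplexify]
    gcongr
    linarith
  have henvelope := tendsto_const_rpow_mul_sq hn (by positivity : 0 < C + 1) hgelfand
  have hρ_sq : (spectralRadius ℂ T).toReal ^ 2 < 1 :=
    pow_lt_one₀ ENNReal.toReal_nonneg (ENNReal.toReal_lt_of_lt_ofReal (by simpa using hρ))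
      two_ne_zero
  refine ⟨tendsto_iff_norm_sub_tendsto_zero.2
    (tendsto_zero_of_rpow_le hn (fun _ => norm_nonneg _) hroot henvelope hρ_sq), ?_⟩
  simpa using limsup_le_of_le_of_tendsto (fun _ => by positivity) hroot henvelope

/-- `‖H_k − X‖ ≤ ‖X‖(1 + ‖X‖‖Y‖)‖S^(2^k)‖²`; if moreover `ρ(S) < 1` then `H_k → X`
with `limsup ‖H_k − X‖^(1/2^k) ≤ ρ(S)²`. -/
theorem sda_Hk_convergence {N : ℕ}
    (H_ G_ : ℕ → Matrix (Fin N) (Fin N) ℝ)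
    (A G H X Y S : Matrix (Fin N) (Fin N) ℝ)
    (hX : X.PosDef)
    (hS : S = (1 + G * X)⁻¹ * A)
    (hDARE : X = Aᵀ * X * (1 + G * X)⁻¹ * A + H)
    (hid : ∀ k, X - H_ k = (Sᵀ) ^ (2 ^ k) * (X + X * G_ k * X) * S ^ (2 ^ k))
    (hGk0 : ∀ k, (G_ k).PosSemidef)
    (hGkY : ∀ k, (Y - G_ k).PosSemidef) :
    (∀ k, ‖H_ k - X‖ ≤ ‖X‖ * (1 + ‖X‖ * ‖Y‖) * ‖S ^ (2 ^ k)‖ ^ 2) ∧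
      (spectralRadius ℂ (S.map Complex.ofReal) < 1 →
        Tendsto H_ atTop (𝓝 X) ∧
          limsup (fun k => ‖H_ k - X‖ ^ ((1 : ℝ) / 2 ^ k)) atTop ≤
            (spectralRadius ℂ (S.map Complex.ofReal)).toReal ^ 2) :=
  sda_Hk_convergence_general H_ G_ X Y S hid hGk0 hGkY
end

section
/- If A = D^A + R^A, G = D^G + R^G, H = D^H + R^H where rank(R^A) ≤ a, rank(R^G) ≤ g, rank(R^H) ≤ h, and I + GH and I + D^G D^H are invertible, then the SDA updates A₁ = A(I+GH)⁻¹A, G₁ = G + A(I+GH)⁻¹G Aᵀ, H₁ = H + AᵀH(I+GH)⁻¹A satisfy: A₁ − D^A(I+D^GD^H)⁻¹D^A has rank at most 2a + g + h, G₁ − (D^G + D^A(I+D^GD^H)⁻¹D^G (D^A)ᵀ) has rank at most 2a + 2g + 2h, and similarly for H₁. In particular, one SDA step preserves the banded-plus-low-rank structure with low-rank parts of rank O(a+g+h). -/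
set_option maxHeartbeats 2000000

open Matrix

private lemma matrix_rank_add_le {N : ℕ} (A B : Matrix (Fin N) (Fin N) ℝ) :
    (A + B).rank ≤ A.rank + B.rank := by
  classical
  have hrange : LinearMap.range (A + B).mulVecLin ≤
      LinearMap.range A.mulVecLin ⊔ LinearMap.range B.mulVecLin := by
    rintro x ⟨y, rfl⟩
    rw [Matrix.mulVecLin_add]
    exact Submodule.add_mem_sup ⟨y, rfl⟩ ⟨y, rfl⟩
  calc (A + B).rank ≤ Module.finrank ℝ
        ↥(LinearMap.range A.mulVecLin ⊔ LinearMap.range B.mulVecLin) :=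
        Submodule.finrank_mono hrange
    _ ≤ A.rank + B.rank := Submodule.finrank_add_le_finrank_add_finrank _ _

private lemma matrix_rank_sub_le {N : ℕ} (A B : Matrix (Fin N) (Fin N) ℝ) :
    (A - B).rank ≤ A.rank + B.rank := by
  have e : A - B = A + (-1) * B := by noncomm_ring
  rw [e]
  exact (matrix_rank_add_le A ((-1) * B)).trans
    (by gcongr; exact Matrix.rank_mul_le_right _ _)

private lemma matrix_rank_mid {N : ℕ} (X Y Z : Matrix (Fin N) (Fin N) ℝ) :
    (X * Y * Z).rank ≤ Y.rank :=
  (Matrix.rank_mul_le_left _ _).trans (Matrix.rank_mul_le_right _ _)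

/-- One SDA step preserves the banded-plus-low-rank structure: the updates of
`(A, G, H)` differ from the updates of `(D^A, D^G, D^H)` by matrices of rank
`O(a + g + h)`. -/
theorem sda_step_lowrank {N : ℕ} (DA DG DH RA RG RH : Matrix (Fin N) (Fin N) ℝ)
    (a g h : ℕ)
    (hRA : RA.rank ≤ a) (hRG : RG.rank ≤ g) (hRH : RH.rank ≤ h)
    (hinv : IsUnit (1 + (DG + RG) * (DH + RH)).det)
    (hinvD : IsUnit (1 + DG * DH).det) :
    ((DA + RA) * (1 + (DG + RG) * (DH + RH))⁻¹ * (DA + RA) -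
        DA * (1 + DG * DH)⁻¹ * DA).rank ≤ 2 * a + g + h ∧
    ((DG + RG) + (DA + RA) * (1 + (DG + RG) * (DH + RH))⁻¹ * (DG + RG) * (DA + RA)ᵀ -
        (DG + DA * (1 + DG * DH)⁻¹ * DG * DAᵀ)).rank ≤ 2 * a + 2 * g + 2 * h ∧
    ((DH + RH) + (DA + RA)ᵀ * (DH + RH) * (1 + (DG + RG) * (DH + RH))⁻¹ * (DA + RA) -
        (DH + DAᵀ * DH * (1 + DG * DH)⁻¹ * DA)).rank ≤ 2 * a + 2 * g + 2 * h := by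
  classical
  set S := (1 + (DG + RG) * (DH + RH))⁻¹ with hSdef
  set T := (1 + DG * DH)⁻¹ with hTdef
  have hS1 : S * (1 + (DG + RG) * (DH + RH)) = 1 := Matrix.nonsing_inv_mul _ hinv
  have hS2 : (1 + (DG + RG) * (DH + RH)) * S = 1 := Matrix.mul_nonsing_inv _ hinv
  have hT1 : T * (1 + DG * DH) = 1 := Matrix.nonsing_inv_mul _ hinvD
  have hT2 : (1 + DG * DH) * T = 1 := Matrix.mul_nonsing_inv _ hinvD
  -- two resolvent identities
  have key : S - T = T * (-(RG * (DH + RH)) - DG * RH) * S := by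
    have e : T * (-(RG * (DH + RH)) - DG * RH) * S
        = T * (1 + DG * DH) * S - T * ((1 + (DG + RG) * (DH + RH)) * S) := by
      noncomm_ring
    rw [e, hT1, hS2, one_mul, mul_one]
  have key2 : S - T = S * (-(RG * (DH + RH)) - DG * RH) * T := by
    have e : S * (-(RG * (DH + RH)) - DG * RH) * T
        = S * ((1 + DG * DH) * T) - S * (1 + (DG + RG) * (DH + RH)) * T := by
      noncomm_ring
    rw [e, hT2, hS1, one_mul, mul_one]
  refine ⟨?_, ?_, ?_⟩
  · -- the A update
    have id1 : (DA + RA) * S * (DA + RA) - DA * T * DA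
        = RA * (S * (DA + RA)) + DA * S * RA
          - DA * (T * (RG * (DH + RH))) * (S * DA)
          - DA * (T * (DG * RH)) * (S * DA) := by
      have e : (DA + RA) * S * (DA + RA) - DA * T * DA
          - (RA * (S * (DA + RA)) + DA * S * RA
            - DA * (T * (RG * (DH + RH))) * (S * DA)
            - DA * (T * (DG * RH)) * (S * DA))
          = DA * ((S - T) - T * (-(RG * (DH + RH)) - DG * RH) * S) * DA := by
        noncomm_ring
      rw [key, sub_self, mul_zero, zero_mul] at e
      exact sub_eq_zero.mp e
    rw [id1]
    have b1 : (RA * (S * (DA + RA))).rank ≤ a :=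
      (Matrix.rank_mul_le_left _ _).trans hRA
    have b2 : (DA * S * RA).rank ≤ a := (Matrix.rank_mul_le_right _ _).trans hRA
    have b3 : (DA * (T * (RG * (DH + RH))) * (S * DA)).rank ≤ g :=
      (matrix_rank_mid _ _ _).trans
        (((Matrix.rank_mul_le_right _ _).trans (Matrix.rank_mul_le_left _ _)).trans hRG)
    have b4 : (DA * (T * (DG * RH)) * (S * DA)).rank ≤ h :=
      (matrix_rank_mid _ _ _).trans
        (((Matrix.rank_mul_le_right _ _).trans (Matrix.rank_mul_le_right _ _)).trans hRH)
    have := (matrix_rank_sub_le _ _).trans (add_le_add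
      ((matrix_rank_sub_le _ _).trans (add_le_add
        ((matrix_rank_add_le _ _).trans (add_le_add b1 b2)) b3)) b4)
    omega
  · -- the G update
    have id2 : (DG + RG) + (DA + RA) * S * (DG + RG) * (DA + RA)ᵀ
          - (DG + DA * T * DG * DAᵀ)
        = RG + RA * (S * (DG + RG) * (DA + RA)ᵀ)
          + DA * S * (DG + RG) * RAᵀ
          + DA * (T * (RG * (1 - (DH + RH) * (S * (DG + RG))))) * DAᵀ
          - DA * (T * (DG * RH) * (S * (DG + RG))) * DAᵀ := by
      have e : (DG + RG) + (DA + RA) * S * (DG + RG) * (DA + RA)ᵀ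
            - (DG + DA * T * DG * DAᵀ)
          - (RG + RA * (S * (DG + RG) * (DA + RA)ᵀ)
            + DA * S * (DG + RG) * RAᵀ
            + DA * (T * (RG * (1 - (DH + RH) * (S * (DG + RG))))) * DAᵀ
            - DA * (T * (DG * RH) * (S * (DG + RG))) * DAᵀ)
          = DA * (((S - T) - T * (-(RG * (DH + RH)) - DG * RH) * S) * (DG + RG)) * DAᵀ := by
        rw [Matrix.transpose_add DA RA]; noncomm_ring
      rw [key, sub_self, zero_mul, mul_zero, zero_mul] at e
      exact sub_eq_zero.mp e
    rw [id2]
    have b1 : (RA * (S * (DG + RG) * (DA + RA)ᵀ)).rank ≤ a :=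
      (Matrix.rank_mul_le_left _ _).trans hRA
    have b2 : (DA * S * (DG + RG) * RAᵀ).rank ≤ a :=
      (Matrix.rank_mul_le_right _ _).trans ((Matrix.rank_transpose _).le.trans hRA)
    have b3 : (DA * (T * (RG * (1 - (DH + RH) * (S * (DG + RG))))) * DAᵀ).rank ≤ g :=
      (matrix_rank_mid _ _ _).trans
        (((Matrix.rank_mul_le_right _ _).trans (Matrix.rank_mul_le_left _ _)).trans hRG)
    have b4 : (DA * (T * (DG * RH) * (S * (DG + RG))) * DAᵀ).rank ≤ h :=
      (matrix_rank_mid _ _ _).trans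
        ((((Matrix.rank_mul_le_left _ _).trans (Matrix.rank_mul_le_right _ _)).trans
          (Matrix.rank_mul_le_right _ _)).trans hRH)
    have := (matrix_rank_sub_le _ _).trans (add_le_add
      ((matrix_rank_add_le _ _).trans (add_le_add
        ((matrix_rank_add_le _ _).trans (add_le_add
          ((matrix_rank_add_le _ _).trans (add_le_add hRG b1)) b2)) b3)) b4)
    omega
  · -- the H update
    have id3 : (DH + RH) + (DA + RA)ᵀ * (DH + RH) * S * (DA + RA)
          - (DH + DAᵀ * DH * T * DA)
        = RH + RAᵀ * ((DH + RH) * S * (DA + RA))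
          + DAᵀ * ((DH + RH) * S) * RA
          + DAᵀ * ((1 - (DH + RH) * S * DG) * (RH * T)) * DA
          - DAᵀ * ((DH + RH) * S * RG * ((DH + RH) * T)) * DA := by
      have e : (DH + RH) + (DA + RA)ᵀ * (DH + RH) * S * (DA + RA)
            - (DH + DAᵀ * DH * T * DA)
          - (RH + RAᵀ * ((DH + RH) * S * (DA + RA))
            + DAᵀ * ((DH + RH) * S) * RA
            + DAᵀ * ((1 - (DH + RH) * S * DG) * (RH * T)) * DA
            - DAᵀ * ((DH + RH) * S * RG * ((DH + RH) * T)) * DA)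
          = DAᵀ * ((DH + RH) * ((S - T) - S * (-(RG * (DH + RH)) - DG * RH) * T)) * DA := by
        rw [Matrix.transpose_add DA RA]; noncomm_ring
      rw [key2, sub_self, mul_zero, mul_zero, zero_mul] at e
      exact sub_eq_zero.mp e
    rw [id3]
    have b1 : (RAᵀ * ((DH + RH) * S * (DA + RA))).rank ≤ a :=
      (Matrix.rank_mul_le_left _ _).trans ((Matrix.rank_transpose _).le.trans hRA)
    have b2 : (DAᵀ * ((DH + RH) * S) * RA).rank ≤ a :=
      (Matrix.rank_mul_le_right _ _).trans hRA
    have b3 : (DAᵀ * ((1 - (DH + RH) * S * DG) * (RH * T)) * DA).rank ≤ h :=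
      (matrix_rank_mid _ _ _).trans
        (((Matrix.rank_mul_le_right _ _).trans (Matrix.rank_mul_le_left _ _)).trans hRH)
    have b4 : (DAᵀ * ((DH + RH) * S * RG * ((DH + RH) * T)) * DA).rank ≤ g :=
      (matrix_rank_mid _ _ _).trans
        (((Matrix.rank_mul_le_left _ _).trans (Matrix.rank_mul_le_right _ _)).trans hRG)
    have := (matrix_rank_sub_le _ _).trans (add_le_add
      ((matrix_rank_add_le _ _).trans (add_le_add
        ((matrix_rank_add_le _ _).trans (add_le_add
          ((matrix_rank_add_le _ _).trans (add_le_add hRH b1)) b2)) b3)) b4)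
    omega
end

section
/- Let A = D^A_0 + L^A_{10}(L^A_{20})ᵀ, G₀ = D^G_0, H₀ = D^H_0 (banded, with I + D^G_0 D^H_0 invertible). Then the first SDA iterate G₁ = G₀ + A(I+G₀H₀)⁻¹G₀Aᵀ equals D^G_1 + L^G_1 K^G_1 (L^G_1)ᵀ where D^G_1 = D^G_0 + D^{AGHG}_0 (D^A_0)ᵀ, L^G_1 = [L^A_{10}, D^{AGHG}_0 L^A_{20}], and K^G_1 = [[(L^A_{20})ᵀ D^{GHG}_0 L^A_{20}, I],[I, 0]], with D^{AGHG}_0 = D^A_0(I+D^G_0D^H_0)⁻¹D^G_0 and D^{GHG}_0 = (I+D^G_0D^H_0)⁻¹D^G_0. -/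
/-!
Put `M = (I + G₀H₀)⁻¹G₀`. The push-through identity `(I + GH)⁻¹G = G(I + HG)⁻¹` together with the
symmetry of `G₀` and `H₀` shows that `M` is symmetric. Expanding `A M Aᵀ` with
`A = D + L₁L₂ᵀ` then gives `D M Dᵀ` plus three cross terms, and by the symmetry of `M` these are
exactly the blocks of `[L₁, D M L₂] [[L₂ᵀ M L₂, I], [I, 0]] [L₁, D M L₂]ᵀ`.
-/

open Matrix

namespace Matrix

variable {m n p R : Type*} [Fintype m] [Fintype n] [CommRing R]

/-- When `1 + A * B` is singular, so is `1 + B * A` (Weinstein–Aronszajn), and both sides are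
`0` by the junk value of `⁻¹`. -/
theorem inv_one_add_mul_mul_eq_mul_inv_one_add_mul [DecidableEq m] [DecidableEq n]
    (A : Matrix m n R) (B : Matrix n m R) :
    (1 + A * B)⁻¹ * A = A * (1 + B * A)⁻¹ := by
  by_cases h : IsUnit (1 + A * B).det
  · have h' : IsUnit (1 + B * A).det := by rwa [← det_one_add_mul_comm]
    have hpush : (1 + A * B) * A = A * (1 + B * A) := by
      simp only [Matrix.add_mul, Matrix.mul_add, Matrix.one_mul, Matrix.mul_one, Matrix.mul_assoc]
    calc (1 + A * B)⁻¹ * A = (1 + A * B)⁻¹ * (A * (1 + B * A)) * (1 + B * A)⁻¹ := by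
          rw [Matrix.mul_assoc, mul_nonsing_inv_cancel_right _ _ h']
      _ = A * (1 + B * A)⁻¹ := by rw [← hpush, nonsing_inv_mul_cancel_left _ _ h]
  · have h' : ¬IsUnit (1 + B * A).det := by rwa [← det_one_add_mul_comm]
    rw [nonsing_inv_apply_not_isUnit _ h, nonsing_inv_apply_not_isUnit _ h', Matrix.zero_mul,
      Matrix.mul_zero]

theorem IsSymm.inv_one_add_mul_mul [DecidableEq n] {G H : Matrix n n R}
    (hG : G.IsSymm) (hH : H.IsSymm) : ((1 + G * H)⁻¹ * G).IsSymm := by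
  rw [IsSymm, transpose_mul, transpose_nonsing_inv, transpose_add, transpose_mul, hG.eq, hH.eq,
    transpose_one, inv_one_add_mul_mul_eq_mul_inv_one_add_mul]

theorem IsSymm.add_mul_transpose_mul_mul_transpose [DecidableEq m] {M : Matrix n n R}
    (hM : M.IsSymm) (D : Matrix p n R) (L₁ : Matrix p m R) (L₂ : Matrix n m R) :
    (D + L₁ * L₂ᵀ) * M * (D + L₁ * L₂ᵀ)ᵀ =
      D * M * Dᵀ + fromCols L₁ (D * M * L₂) * Matrix.fromBlocks (L₂ᵀ * M * L₂) 1 1 (0 : Matrix m m R) *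
        (fromCols L₁ (D * M * L₂))ᵀ := by
  rw [transpose_fromCols, fromCols_mul_fromBlocks, fromCols_mul_fromRows]
  simp only [transpose_add, transpose_mul, transpose_transpose, hM.eq, Matrix.mul_one,
    Matrix.mul_zero, add_zero, Matrix.mul_add, Matrix.add_mul, Matrix.mul_assoc]
  abel

end Matrix

theorem fsda_G1_general {N m : ℕ} (DA DG DH : Matrix (Fin N) (Fin N) ℝ)
    (L10 L20 : Matrix (Fin N) (Fin m) ℝ)
    (hDG : DG.IsSymm) (hDH : DH.IsSymm) :
    DG + (DA + L10 * L20ᵀ) * (1 + DG * DH)⁻¹ * DG * (DA + L10 * L20ᵀ)ᵀ =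
      (DG + (DA * (1 + DG * DH)⁻¹ * DG) * DAᵀ) +
        Matrix.fromCols L10 ((DA * (1 + DG * DH)⁻¹ * DG) * L20) *
          fromBlocks (L20ᵀ * ((1 + DG * DH)⁻¹ * DG) * L20) 1 1 (0 : Matrix (Fin m) (Fin m) ℝ) *
          (Matrix.fromCols L10 ((DA * (1 + DG * DH)⁻¹ * DG) * L20))ᵀ := by
  have hexpand := (hDG.inv_one_add_mul_mul hDH).add_mul_transpose_mul_mul_transpose DA L10 L20
  simp only [Matrix.mul_assoc] at hexpand ⊢
  rw [hexpand, add_assoc]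

/-- The `k = 1` FSDA factored form of `G₁`. -/
theorem fsda_G1 {N m : ℕ} (DA DG DH : Matrix (Fin N) (Fin N) ℝ)
    (L10 L20 : Matrix (Fin N) (Fin m) ℝ)
    (hDG : DG.IsSymm) (hDH : DH.IsSymm)
    (hinv : IsUnit (1 + DG * DH).det) :
    DG + (DA + L10 * L20ᵀ) * (1 + DG * DH)⁻¹ * DG * (DA + L10 * L20ᵀ)ᵀ =
      (DG + (DA * (1 + DG * DH)⁻¹ * DG) * DAᵀ) +
        Matrix.fromCols L10 ((DA * (1 + DG * DH)⁻¹ * DG) * L20) *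
          fromBlocks (L20ᵀ * ((1 + DG * DH)⁻¹ * DG) * L20) 1 1 (0 : Matrix (Fin m) (Fin m) ℝ) *
          (Matrix.fromCols L10 ((DA * (1 + DG * DH)⁻¹ * DG) * L20))ᵀ :=
  fsda_G1_general DA DG DH L10 L20 hDG hDH
end

section
/- Under the same hypotheses as the k=1 FSDA formula for G₁, the first SDA iterate A₁ = A(I+G₀H₀)⁻¹A equals D^A_1 + L^A_{11} K^A_1 (L^A_{21})ᵀ where D^A_1 = D^{AGH}_0 D^A_0, L^A_{11} = [L^A_{10}, D^{AGH}_0 L^A_{10}], L^A_{21} = [L^A_{20}, D^{AᵀHG}_0 L^A_{20}], and K^A_1 = [[(L^A_{20})ᵀ D^{GH}_0 L^A_{10}, I],[I, 0]], with D^{AGH}_0 = D^A_0(I+D^G_0D^H_0)⁻¹, D^{AᵀHG}_0 = (D^A_0)ᵀ(I+D^H_0D^G_0)⁻¹, D^{GH}_0 = (I+D^G_0D^H_0)⁻¹. -/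
open Matrix

namespace Matrix

variable {n m R : Type*} [Fintype n] [CommRing R]

theorem add_mul_transpose_mul_mul_add_mul_transpose [Fintype m] [DecidableEq m]
    (D M : Matrix n n R) (U V : Matrix n m R) :
    (D + U * Vᵀ) * M * (D + U * Vᵀ) =
      D * M * D +
        fromCols U (D * M * U) * (fromBlocks (Vᵀ * M * U) 1 1 0 : Matrix (m ⊕ m) (m ⊕ m) R) *
          (fromCols V (Dᵀ * Mᵀ * V))ᵀ := by
  rw [transpose_fromCols, transpose_mul, transpose_mul, fromCols_mul_fromBlocks,
    fromCols_mul_fromRows]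
  simp only [Matrix.mul_one, Matrix.mul_zero, add_zero, Matrix.add_mul, Matrix.mul_add,
    Matrix.mul_assoc, transpose_transpose]
  abel

theorem transpose_inv_one_add_mul_of_isSymm [DecidableEq n] {A B : Matrix n n R}
    (hA : A.IsSymm) (hB : B.IsSymm) : (1 + A * B)⁻¹ᵀ = (1 + B * A)⁻¹ := by
  rw [transpose_nonsing_inv, transpose_add, transpose_one, transpose_mul, hA.eq, hB.eq]

end Matrix

theorem fsda_A1_general {N m : ℕ} (DA DG DH : Matrix (Fin N) (Fin N) ℝ)
    (L10 L20 : Matrix (Fin N) (Fin m) ℝ)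
    (hDG : DG.IsSymm) (hDH : DH.IsSymm) :
    (DA + L10 * L20ᵀ) * (1 + DG * DH)⁻¹ * (DA + L10 * L20ᵀ) =
      (DA * (1 + DG * DH)⁻¹) * DA +
        Matrix.fromCols L10 ((DA * (1 + DG * DH)⁻¹) * L10) *
          (fromBlocks (L20ᵀ * (1 + DG * DH)⁻¹ * L10) 1 1 0 : Matrix (Fin m ⊕ Fin m) (Fin m ⊕ Fin m) ℝ) *
          (Matrix.fromCols L20 ((DAᵀ * (1 + DH * DG)⁻¹) * L20))ᵀ := by
  rw [← transpose_inv_one_add_mul_of_isSymm hDG hDH]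
  exact add_mul_transpose_mul_mul_add_mul_transpose DA _ L10 L20

/-- The `k = 1` FSDA factored form of `A₁`. -/
theorem fsda_A1 {N m : ℕ} (DA DG DH : Matrix (Fin N) (Fin N) ℝ)
    (L10 L20 : Matrix (Fin N) (Fin m) ℝ)
    (hDG : DG.IsSymm) (hDH : DH.IsSymm)
    (hinv : IsUnit (1 + DG * DH).det) :
    (DA + L10 * L20ᵀ) * (1 + DG * DH)⁻¹ * (DA + L10 * L20ᵀ) =
      (DA * (1 + DG * DH)⁻¹) * DA +
        Matrix.fromCols L10 ((DA * (1 + DG * DH)⁻¹) * L10) *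
          (fromBlocks (L20ᵀ * (1 + DG * DH)⁻¹ * L10) 1 1 0 : Matrix (Fin m ⊕ Fin m) (Fin m ⊕ Fin m) ℝ) *
          (Matrix.fromCols L20 ((DAᵀ * (1 + DH * DG)⁻¹) * L20))ᵀ :=
  fsda_A1_general DA DG DH L10 L20 hDG hDH
end

section
/- Let H_k = D^H_k + L^H_k K^H_k (L^H_k)ᵀ be symmetric, and suppose I + G H_k is invertible where G = D^G_0 is symmetric. Then the DARE residual D(H_k) = −H_k + AᵀH_k(I + G H_k)⁻¹A + H is symmetric, and if A = D^A_0 + L^A_{10}(L^A_{20})ᵀ, H = D^H_0 + (rank ≤ r term), then D(H_k) − (D^H_0 − D^H_k + (D^A_0)ᵀ D^H_k (I + D^G_0 D^H_k)⁻¹ D^A_0) has rank at most 2·m^a + 2·m^h_k + r, where m^a is the number of columns of L^A_{10} and m^h_k of L^H_k. -/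
/-!
The banded part subtracted in the theorem is itself a DARE residual, that of `D^H_k` for the
data `(D^A_0, G, D^H_0)`, so the claim is a perturbation bound for the residual. By the
resolvent identity `X (I + G X)⁻¹ - Y (I + G Y)⁻¹ = (I + X G)⁻¹ (X - Y) (I + G Y)⁻¹`,
replacing `Y = D^H_k` by `X = H_k` changes `X (I + G X)⁻¹` by a matrix of rank at most
`rank (L^H_k K^H_k (L^H_k)ᵀ) ≤ mʰ`; expanding the congruence by
`A = D^A_0 + L^A_{10} (L^A_{20})ᵀ` adds two terms of rank at most `mᵃ` each, and the terms
`-X + Y` and `H - D^H_0` contribute `mʰ` and `r`. Symmetry comes from the push-through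
identity `X (I + G X)⁻¹ = (I + X G)⁻¹ X`.
-/

open Matrix

namespace Matrix

theorem IsSymm.transpose_mul_mul_s16 {α m n : Type*} [CommSemiring α] [Fintype m] {S : Matrix m m α}
    (hS : S.IsSymm) (A : Matrix m n α) : (Aᵀ * S * A).IsSymm := by
  rw [IsSymm, transpose_mul, transpose_mul, transpose_transpose, hS.eq, Matrix.mul_assoc]

section Rank

variable {K : Type*} [Field K] {l m n : Type*} [Fintype l] [Fintype n]

theorem rank_add_le (A B : Matrix m n K) : (A + B).rank ≤ A.rank + B.rank := by
  rw [rank, rank, rank, mulVecLin_add]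
  refine (Submodule.finrank_mono ?_).trans (Submodule.finrank_add_le_finrank_add_finrank _ _)
  rintro _ ⟨v, rfl⟩
  exact Submodule.add_mem_sup (LinearMap.mem_range_self _ v) (LinearMap.mem_range_self _ v)

theorem rank_neg (A : Matrix m n K) : (-A).rank = A.rank := by
  have : (-A).mulVecLin = -A.mulVecLin := LinearMap.ext fun v => neg_mulVec v A
  rw [rank, rank, this, LinearMap.range_neg]

theorem rank_mul_le_card_inner (A : Matrix m l K) (B : Matrix l n K) :
    (A * B).rank ≤ Fintype.card l :=
  (rank_mul_le_left A B).trans A.rank_le_card_width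

theorem rank_transpose_mul_mul_le [Fintype m] (A : Matrix n m K) (M : Matrix n n K) :
    (Aᵀ * M * A).rank ≤ M.rank :=
  (rank_mul_le_left _ A).trans (rank_mul_le_right Aᵀ M)

theorem rank_congr_add_mul_transpose_sub_le (A₀ M M₀ : Matrix n n K) (L₁ L₂ : Matrix n l K) :
    ((A₀ + L₁ * L₂ᵀ)ᵀ * M * (A₀ + L₁ * L₂ᵀ) - A₀ᵀ * M₀ * A₀).rank ≤
      (M - M₀).rank + 2 * Fintype.card l := by
  have hsplit : (A₀ + L₁ * L₂ᵀ)ᵀ * M * (A₀ + L₁ * L₂ᵀ) - A₀ᵀ * M₀ * A₀ =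
      A₀ᵀ * (M - M₀) * A₀ + (A₀ᵀ * M * L₁) * L₂ᵀ + L₂ * (L₁ᵀ * M * (A₀ + L₁ * L₂ᵀ)) := by
    simp only [transpose_add, transpose_mul, transpose_transpose, Matrix.add_mul, Matrix.mul_add,
      Matrix.mul_sub, Matrix.sub_mul, Matrix.mul_assoc]
    abel
  rw [hsplit]
  calc _ ≤ (A₀ᵀ * (M - M₀) * A₀).rank + (A₀ᵀ * M * L₁ * L₂ᵀ).rank +
        (L₂ * (L₁ᵀ * M * (A₀ + L₁ * L₂ᵀ))).rank :=
        (rank_add_le _ _).trans (Nat.add_le_add_right (rank_add_le _ _) _)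
    _ ≤ (M - M₀).rank + Fintype.card l + Fintype.card l := by
        gcongr
        · exact rank_transpose_mul_mul_le A₀ _
        · exact (rank_mul_le_right _ _).trans L₂ᵀ.rank_le_card_height
        · exact rank_mul_le_card_inner _ _
    _ = (M - M₀).rank + 2 * Fintype.card l := by ring

end Rank

section Resolvent

variable {α : Type*} [CommRing α] {n : Type*} [Fintype n] [DecidableEq n]

theorem isUnit_det_one_add_mul_comm {X G : Matrix n n α} (h : IsUnit (1 + G * X).det) :
    IsUnit (1 + X * G).det := by
  rwa [det_one_add_mul_comm]

/-- The push-through identity; it holds unconditionally because `1 + G X` and `1 + X G` are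
invertible together, and otherwise both inverses are `0`. -/
theorem mul_inv_one_add_mul (X G : Matrix n n α) :
    X * (1 + G * X)⁻¹ = (1 + X * G)⁻¹ * X := by
  by_cases h : IsUnit (1 + G * X).det
  · have hcomm : (1 + X * G) * X = X * (1 + G * X) := by noncomm_ring
    calc X * (1 + G * X)⁻¹ = (1 + X * G)⁻¹ * ((1 + X * G) * X) * (1 + G * X)⁻¹ := by
          rw [nonsing_inv_mul_cancel_left _ _ (isUnit_det_one_add_mul_comm h)]
      _ = (1 + X * G)⁻¹ * X := by
          rw [hcomm, ← Matrix.mul_assoc, mul_nonsing_inv_cancel_right _ _ h]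
  · have h' : ¬IsUnit (1 + X * G).det := by rwa [det_one_add_mul_comm]
    rw [nonsing_inv_apply_not_isUnit _ h, nonsing_inv_apply_not_isUnit _ h', Matrix.mul_zero,
      Matrix.zero_mul]

theorem mul_inv_one_add_mul_sub_mul_inv_one_add_mul {X Y G : Matrix n n α}
    (hX : IsUnit (1 + G * X).det) (hY : IsUnit (1 + G * Y).det) :
    X * (1 + G * X)⁻¹ - Y * (1 + G * Y)⁻¹ = (1 + X * G)⁻¹ * (X - Y) * (1 + G * Y)⁻¹ := by
  have hXY : X - Y = X * (1 + G * Y) - (1 + X * G) * Y := by noncomm_ring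
  rw [hXY, Matrix.mul_sub, Matrix.sub_mul, ← Matrix.mul_assoc, mul_nonsing_inv_cancel_right _ _ hY,
    Matrix.mul_assoc, Matrix.mul_assoc (1 + X * G),
    nonsing_inv_mul_cancel_left _ _ (isUnit_det_one_add_mul_comm hX), mul_inv_one_add_mul]

theorem IsSymm.mul_inv_one_add_mul {X G : Matrix n n α} (hX : X.IsSymm) (hG : G.IsSymm) :
    (X * (1 + G * X)⁻¹).IsSymm := by
  rw [IsSymm, transpose_mul, transpose_nonsing_inv, transpose_add, transpose_one, transpose_mul,
    hX.eq, hG.eq, ← Matrix.mul_inv_one_add_mul]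

end Resolvent

end Matrix

section DARE

variable {n : Type*} [Fintype n] [DecidableEq n]

noncomputable def dareResidual {α : Type*} [CommRing α] (A G H X : Matrix n n α) : Matrix n n α :=
  -X + Aᵀ * X * (1 + G * X)⁻¹ * A + H

theorem isSymm_dareResidual {α : Type*} [CommRing α] (A : Matrix n n α) {G H X : Matrix n n α}
    (hG : G.IsSymm) (hH : H.IsSymm) (hX : X.IsSymm) : (dareResidual A G H X).IsSymm := by
  rw [dareResidual, Matrix.mul_assoc Aᵀ X]
  exact (hX.neg.add ((hX.mul_inv_one_add_mul hG).transpose_mul_mul_s16 A)).add hH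

theorem rank_dareResidual_sub_le {K : Type*} [Field K] {l : Type*} [Fintype l]
    (A₀ G H H₀ X Y : Matrix n n K) (L₁ L₂ : Matrix n l K)
    (hX : IsUnit (1 + G * X).det) (hY : IsUnit (1 + G * Y).det) :
    (dareResidual (A₀ + L₁ * L₂ᵀ) G H X - dareResidual A₀ G H₀ Y).rank ≤
      2 * (X - Y).rank + 2 * Fintype.card l + (H - H₀).rank := by
  have hsplit : dareResidual (A₀ + L₁ * L₂ᵀ) G H X - dareResidual A₀ G H₀ Y =
      -(X - Y) + ((A₀ + L₁ * L₂ᵀ)ᵀ * (X * (1 + G * X)⁻¹) * (A₀ + L₁ * L₂ᵀ) -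
        A₀ᵀ * (Y * (1 + G * Y)⁻¹) * A₀) + (H - H₀) := by
    simp only [dareResidual, Matrix.mul_assoc]
    abel
  have hres : (X * (1 + G * X)⁻¹ - Y * (1 + G * Y)⁻¹).rank ≤ (X - Y).rank := by
    rw [mul_inv_one_add_mul_sub_mul_inv_one_add_mul hX hY]
    exact (rank_mul_le_left _ _).trans (rank_mul_le_right _ _)
  rw [hsplit]
  calc _ ≤ (-(X - Y)).rank + ((A₀ + L₁ * L₂ᵀ)ᵀ * (X * (1 + G * X)⁻¹) * (A₀ + L₁ * L₂ᵀ) -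
          A₀ᵀ * (Y * (1 + G * Y)⁻¹) * A₀).rank + (H - H₀).rank :=
        (rank_add_le _ _).trans (Nat.add_le_add_right (rank_add_le _ _) _)
    _ ≤ (X - Y).rank + ((X - Y).rank + 2 * Fintype.card l) + (H - H₀).rank := by
        rw [rank_neg]
        gcongr
        exact (rank_congr_add_mul_transpose_sub_le _ _ _ _ _).trans (by gcongr)
    _ = 2 * (X - Y).rank + 2 * Fintype.card l + (H - H₀).rank := by ring

end DARE

/-- The DARE residual `D(H_k) = −H_k + Aᵀ H_k (I + G H_k)⁻¹ A + H` is symmetric, and after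
subtracting its banded part it has rank at most `2 mᵃ + 2 mʰ + r`. -/
theorem fsda_residual_structure {N ma mh r : ℕ}
    (DA0 DG0 DH0 DHk H : Matrix (Fin N) (Fin N) ℝ)
    (L10 L20 : Matrix (Fin N) (Fin ma) ℝ)
    (LHk : Matrix (Fin N) (Fin mh) ℝ) (KHk : Matrix (Fin mh) (Fin mh) ℝ)
    (hDHk : DHk.IsSymm) (hKHk : KHk.IsSymm) (hG : DG0.IsSymm) (hH : H.IsSymm)
    (hHr : (H - DH0).rank ≤ r)
    (hinv : IsUnit (1 + DG0 * (DHk + LHk * KHk * LHkᵀ)).det)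
    (hinvb : IsUnit (1 + DG0 * DHk).det) :
    (-(DHk + LHk * KHk * LHkᵀ) +
        (DA0 + L10 * L20ᵀ)ᵀ * (DHk + LHk * KHk * LHkᵀ) *
          (1 + DG0 * (DHk + LHk * KHk * LHkᵀ))⁻¹ * (DA0 + L10 * L20ᵀ) + H).IsSymm ∧
      ((-(DHk + LHk * KHk * LHkᵀ) +
          (DA0 + L10 * L20ᵀ)ᵀ * (DHk + LHk * KHk * LHkᵀ) *
            (1 + DG0 * (DHk + LHk * KHk * LHkᵀ))⁻¹ * (DA0 + L10 * L20ᵀ) + H) -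
        (DH0 - DHk + DA0ᵀ * DHk * (1 + DG0 * DHk)⁻¹ * DA0)).rank ≤
        2 * ma + 2 * mh + r := by
  have hHk : (DHk + LHk * KHk * LHkᵀ).IsSymm :=
    hDHk.add (by simpa using hKHk.transpose_mul_mul_s16 LHkᵀ)
  refine ⟨isSymm_dareResidual _ hG hH hHk, ?_⟩
  have hbanded : DH0 - DHk + DA0ᵀ * DHk * (1 + DG0 * DHk)⁻¹ * DA0 =
      dareResidual DA0 DG0 DH0 DHk := by
    rw [dareResidual]
    abel
  have hlow : (DHk + LHk * KHk * LHkᵀ - DHk).rank ≤ mh := by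
    rw [add_sub_cancel_left]
    simpa using rank_mul_le_card_inner (LHk * KHk) LHkᵀ
  have hres := rank_dareResidual_sub_le DA0 DG0 H DH0 _ DHk L10 L20 hinv hinvb
  rw [Fintype.card_fin] at hres
  change (dareResidual (DA0 + L10 * L20ᵀ) DG0 H _ - _).rank ≤ _
  rw [hbanded]
  omega
end

section
/- For any real matrices where the products are defined: if X = Q U + Q̃ Ũ with Qᵀ Q = I, then for any symmetric kernel K, ‖X K Xᵀ − Q U K Uᵀ Qᵀ‖ ≤ 2‖Ũ‖‖K‖(‖U‖ + ‖Ũ‖); in particular, truncating the component Q̃ Ũ with ‖Ũ‖ < τ changes X K Xᵀ by at most 2τ‖K‖(‖U‖ + τ) in spectral norm. -/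
open Matrix

open scoped Matrix.Norms.L2Operator

/-! Replacing `A` by `A + B` changes `A K Aᴴ` by the three cross terms `A K Bᴴ`, `B K Aᴴ`,
`B K Bᴴ`, each bounded by submultiplicativity of the spectral norm. With `A = Q U` and
`B = Q̃ Ũ`, the isometries `Q` and `Q̃` leave the norms of `U` and `Ũ` unchanged. -/

namespace Matrix

lemma add_mul_mul_conjTranspose_add_sub {R m n : Type*} [CommRing R] [StarRing R] [Fintype n]
    (A B : Matrix m n R) (K : Matrix n n R) :
    (A + B) * K * (A + B)ᴴ - A * K * Aᴴ = A * K * Bᴴ + B * K * Aᴴ + B * K * Bᴴ := by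
  simp only [conjTranspose_add, Matrix.add_mul, Matrix.mul_add]
  abel

variable {𝕜 : Type*} [RCLike 𝕜] {m n p q : Type*} [Fintype m] [Fintype n] [DecidableEq n]
  [Fintype p] [DecidableEq p] [Fintype q] [DecidableEq q]

lemma l2_opNorm_mul_of_conjTranspose_mul_self_eq_one {Q : Matrix m n 𝕜}
    (hQ : Qᴴ * Q = 1) (W : Matrix n p 𝕜) : ‖Q * W‖ = ‖W‖ := by
  have hsq : ‖Q * W‖ * ‖Q * W‖ = ‖W‖ * ‖W‖ := by
    rw [← l2_opNorm_conjTranspose_mul_self, ← l2_opNorm_conjTranspose_mul_self,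
      conjTranspose_mul, Matrix.mul_assoc, ← Matrix.mul_assoc Qᴴ, hQ, Matrix.one_mul]
  exact (mul_self_inj (norm_nonneg _) (norm_nonneg _)).mp hsq

lemma l2_opNorm_mul_mul_conjTranspose_le (A : Matrix m n 𝕜) (K : Matrix n p 𝕜)
    (B : Matrix q p 𝕜) : ‖A * K * Bᴴ‖ ≤ ‖A‖ * ‖K‖ * ‖B‖ := by
  calc ‖A * K * Bᴴ‖ ≤ ‖A * K‖ * ‖Bᴴ‖ := l2_opNorm_mul _ _
    _ ≤ ‖A‖ * ‖K‖ * ‖B‖ := by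
      rw [l2_opNorm_conjTranspose]
      gcongr
      exact l2_opNorm_mul _ _

lemma l2_opNorm_add_mul_mul_conjTranspose_add_sub_le [DecidableEq m] (A B : Matrix m n 𝕜)
    (K : Matrix n n 𝕜) :
    ‖(A + B) * K * (A + B)ᴴ - A * K * Aᴴ‖ ≤ 2 * ‖B‖ * ‖K‖ * (‖A‖ + ‖B‖) := by
  rw [add_mul_mul_conjTranspose_add_sub]
  calc ‖A * K * Bᴴ + B * K * Aᴴ + B * K * Bᴴ‖
      ≤ ‖A * K * Bᴴ‖ + ‖B * K * Aᴴ‖ + ‖B * K * Bᴴ‖ := norm_add₃_le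
    _ ≤ ‖A‖ * ‖K‖ * ‖B‖ + ‖B‖ * ‖K‖ * ‖A‖ + ‖B‖ * ‖K‖ * ‖B‖ := by
      gcongr <;> exact l2_opNorm_mul_mul_conjTranspose_le _ _ _
    _ ≤ 2 * ‖B‖ * ‖K‖ * (‖A‖ + ‖B‖) := by
      have := mul_nonneg (mul_nonneg (norm_nonneg B) (norm_nonneg K)) (norm_nonneg B)
      linarith

end Matrix

theorem ptc_error_bound_general {N r s m : ℕ}
    (X : Matrix (Fin N) (Fin m) ℝ)
    (Q : Matrix (Fin N) (Fin r) ℝ) (U : Matrix (Fin r) (Fin m) ℝ)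
    (Qt : Matrix (Fin N) (Fin s) ℝ) (Ut : Matrix (Fin s) (Fin m) ℝ)
    (K : Matrix (Fin m) (Fin m) ℝ)
    (hX : X = Q * U + Qt * Ut)
    (hQ : Qᵀ * Q = 1) (hQt : Qtᵀ * Qt = 1) :
    ‖X * K * Xᵀ - Q * U * K * Uᵀ * Qᵀ‖ ≤ 2 * ‖Ut‖ * ‖K‖ * (‖U‖ + ‖Ut‖) ∧
      ∀ τ : ℝ, ‖Ut‖ < τ →
        ‖X * K * Xᵀ - Q * U * K * Uᵀ * Qᵀ‖ ≤ 2 * τ * ‖K‖ * (‖U‖ + τ) := by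
  simp only [← conjTranspose_eq_transpose_of_trivial] at hQ hQt ⊢
  have hbound : ‖X * K * Xᴴ - Q * U * K * Uᴴ * Qᴴ‖ ≤ 2 * ‖Ut‖ * ‖K‖ * (‖U‖ + ‖Ut‖) := by
    have hkept : Q * U * K * Uᴴ * Qᴴ = Q * U * K * (Q * U)ᴴ := by
      simp only [conjTranspose_mul, Matrix.mul_assoc]
    rw [hkept, hX, ← l2_opNorm_mul_of_conjTranspose_mul_self_eq_one hQ U,
      ← l2_opNorm_mul_of_conjTranspose_mul_self_eq_one hQt Ut]
    exact l2_opNorm_add_mul_mul_conjTranspose_add_sub_le _ _ _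
  refine ⟨hbound, fun τ hτ => hbound.trans ?_⟩
  have hτ₀ : 0 ≤ τ := (norm_nonneg Ut).trans hτ.le
  gcongr

/-- Error bound for the partial truncation and compression (PTC) step: discarding the
`Q̃ Ũ` component of `X = Q U + Q̃ Ũ` perturbs `X K Xᵀ` by at most
`2 ‖Ũ‖ ‖K‖ (‖U‖ + ‖Ũ‖)` in the spectral norm. -/
theorem ptc_error_bound {N r s m : ℕ}
    (X : Matrix (Fin N) (Fin m) ℝ)
    (Q : Matrix (Fin N) (Fin r) ℝ) (U : Matrix (Fin r) (Fin m) ℝ)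
    (Qt : Matrix (Fin N) (Fin s) ℝ) (Ut : Matrix (Fin s) (Fin m) ℝ)
    (K : Matrix (Fin m) (Fin m) ℝ)
    (hX : X = Q * U + Qt * Ut)
    (hQ : Qᵀ * Q = 1) (hQt : Qtᵀ * Qt = 1) (horth : Qᵀ * Qt = 0)
    (hK : K.IsSymm) :
    ‖X * K * Xᵀ - Q * U * K * Uᵀ * Qᵀ‖ ≤ 2 * ‖Ut‖ * ‖K‖ * (‖U‖ + ‖Ut‖) ∧
      ∀ τ : ℝ, ‖Ut‖ < τ →
        ‖X * K * Xᵀ - Q * U * K * Uᵀ * Qᵀ‖ ≤ 2 * τ * ‖K‖ * (‖U‖ + τ) :=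
  ptc_error_bound_general X Q U Qt Ut K hX hQ hQt
end
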